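/- arXiv:math/0603433 — 6 statements merged into one kernel-verified Lean document; each statement's English description precedes it below -/
import Mathlib

section
/- For every real r and every real y, cosh(2r·arcsinh(y)) = Σ_{k=0}^∞ c_k(r) (2y)^{2k}/(2k)!, where c_0(r) = 1 and c_k(r) = r² · ∏_{j=1}^{k−1} (r² − j²) for k ≥ 1, the series converging for |y| sufficiently small (e.g. |y| < 1/2). -/
/-!
Put `B_k = c_k(r) 4^k / (2k)!` and `P(z) = ∑ B_k z^k`, so that the claimed series is `P(y²)`.
The recurrence `(k + 1)(2k + 1) B_{k+1} = 2(r² - k²) B_k` says exactly that `P` solves the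
hypergeometric equation `2z(1 + z) P'' + (1 + 2z) P' = 2r² P`; it also shows that `|B_k|` is
nonincreasing once `k ≥ |r|`, so `P` and its derivatives converge termwise for `|z| < 1`.
With `z = sinh² t` the equation becomes `f'' = (2r)² f` for `f(t) = P(sinh² t)`, and
`f(0) = 1`, `f'(0) = 0`; hence `f(t) = cosh (2rt)`, and `t = arsinh y` gives the claim.
-/

/-- Coefficients `c_k(r)`: `c_0 = 1`, `c_k = r² ∏_{j=1}^{k-1} (r² - j²)` for `k ≥ 1`. -/
def coshCoeff (r : ℝ) : ℕ → ℝ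
  | 0 => 1
  | k + 1 => r ^ 2 * ∏ j ∈ Finset.range k, (r ^ 2 - ((j : ℝ) + 1) ^ 2)

open Real Set

namespace RealPowerSeries

def derivCoeff (a : ℕ → ℝ) (k : ℕ) : ℝ := (k + 1) * a (k + 1)

noncomputable def sum (a : ℕ → ℝ) (z : ℝ) : ℝ := ∑' k, a k * z ^ k

lemma iterate_derivCoeff_apply (a : ℕ → ℝ) (j k : ℕ) :
    derivCoeff^[j] a k = (k + j).descFactorial j * a (k + j) := by
  induction j generalizing a with
  | zero => simp
  | succ j ih =>
    rw [Function.iterate_succ_apply, ih, derivCoeff, ← add_assoc, Nat.succ_descFactorial_succ]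
    push_cast
    ring

lemma summable_abs_iterate_derivCoeff_mul_pow {a : ℕ → ℝ} {M ρ : ℝ} (ha : ∀ k, |a k| ≤ M)
    (hρ : |ρ| < 1) (j : ℕ) : Summable fun k => |derivCoeff^[j] a k| * |ρ| ^ k := by
  refine .of_nonneg_of_le (fun k => by positivity) (fun k => ?_)
    ((summable_descFactorial_mul_geometric_of_norm_lt_one j (r := |ρ|) (by simpa)).mul_left M)
  rw [iterate_derivCoeff_apply, abs_mul, Nat.abs_cast]
  calc _ = |a (k + j)| * ((k + j).descFactorial j * |ρ| ^ k) := by ring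
    _ ≤ _ := mul_le_mul_of_nonneg_right (ha _) (by positivity)

lemma hasSum_iterate_derivCoeff_mul_pow {a : ℕ → ℝ} {M z : ℝ} (ha : ∀ k, |a k| ≤ M)
    (hz : |z| < 1) (j : ℕ) :
    HasSum (fun k => derivCoeff^[j] a k * z ^ k) (sum (derivCoeff^[j] a) z) :=
  Summable.hasSum <| .of_norm_bounded (summable_abs_iterate_derivCoeff_mul_pow ha hz j)
    fun k => by rw [norm_mul, norm_pow, Real.norm_eq_abs, Real.norm_eq_abs]

lemma hasDerivAt_sum {a : ℕ → ℝ} {ρ z : ℝ}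
    (hs : Summable fun k => |derivCoeff a k| * ρ ^ k) (hz : |z| < ρ) :
    HasDerivAt (sum a) (sum (derivCoeff a) z) z := by
  have hρ : 0 < ρ := (abs_nonneg z).trans_lt hz
  have hu : Summable fun k : ℕ => k * |a k| * ρ ^ (k - 1) := by
    rw [← summable_nat_add_iff 1]
    refine hs.congr fun k => ?_
    rw [derivCoeff, abs_mul, abs_of_nonneg (by positivity), Nat.add_sub_cancel]
    push_cast
    ring
  have hbound : ∀ (k : ℕ), ∀ w ∈ Metric.ball (0 : ℝ) ρ,
      ‖k * a k * w ^ (k - 1)‖ ≤ k * |a k| * ρ ^ (k - 1) := by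
    intro k w hw
    rw [mem_ball_zero_iff] at hw
    rw [norm_mul, norm_mul, norm_pow]
    simp only [Real.norm_eq_abs, Nat.abs_cast]
    gcongr
    exact hw.le
  have hsum₀ : Summable fun k => a k * (0 : ℝ) ^ k :=
    summable_of_ne_finset_zero (s := {0}) fun k hk => by simp_all
  have h : HasDerivAt (sum a) (∑' k : ℕ, k * a k * z ^ (k - 1)) z :=
    hasDerivAt_tsum_of_isPreconnected hu Metric.isOpen_ball (convex_ball 0 ρ).isPreconnected
      (fun k w _ => by
        simpa [mul_comm, mul_left_comm, mul_assoc] using (hasDerivAt_pow k w).const_mul (a k))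
      hbound (Metric.mem_ball_self hρ) hsum₀ (mem_ball_zero_iff.2 hz)
  have hs' : Summable fun k => derivCoeff a k * z ^ k :=
    .of_norm_bounded hs fun k => by
      rw [norm_mul, norm_pow, Real.norm_eq_abs, Real.norm_eq_abs]
      gcongr
  convert h using 1
  rw [tsum_eq_zero_add' (f := fun k : ℕ => (k : ℝ) * a k * z ^ (k - 1))]
  · simp [sum, derivCoeff]
  · simpa [derivCoeff] using hs'

lemma hasDerivAt_sum_iterate_derivCoeff {a : ℕ → ℝ} {M z : ℝ} (ha : ∀ k, |a k| ≤ M)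
    (hz : |z| < 1) (j : ℕ) :
    HasDerivAt (sum (derivCoeff^[j] a)) (sum (derivCoeff^[j + 1] a) z) z := by
  obtain ⟨ρ, hzρ, hρ⟩ := exists_between hz
  have hρ₀ : 0 < ρ := (abs_nonneg z).trans_lt hzρ
  have hs := summable_abs_iterate_derivCoeff_mul_pow ha (ρ := ρ) (by rwa [abs_of_pos hρ₀]) (j + 1)
  rw [abs_of_pos hρ₀] at hs
  simp only [Function.iterate_succ_apply'] at hs ⊢
  exact hasDerivAt_sum hs hzρ

lemma sum_zero (a : ℕ → ℝ) : sum a 0 = a 0 := by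
  rw [sum, tsum_eq_single 0 fun k hk => by simp [hk]]
  simp

lemma hasSum_natCast_mul_mul_pow {b : ℕ → ℝ} {z s : ℝ}
    (h : HasSum (fun k => derivCoeff b k * z ^ k) s) :
    HasSum (fun k => k * b k * z ^ k) (z * s) := by
  rw [← hasSum_nat_add_iff' 1]
  simpa [derivCoeff, pow_succ, mul_comm, mul_left_comm, mul_assoc] using h.mul_left z

/-- For `c = r²` this is the equation of `₂F₁(r, -r; 1/2; -z)`. -/
theorem hypergeometric_ode_of_hasSum {a : ℕ → ℝ} {c z P P' P'' : ℝ}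
    (hrec : ∀ k : ℕ, (k + 1) * (2 * k + 1) * a (k + 1) = 2 * (c - k ^ 2) * a k)
    (h₀ : HasSum (fun k => a k * z ^ k) P) (h₁ : HasSum (fun k => derivCoeff a k * z ^ k) P')
    (h₂ : HasSum (fun k => derivCoeff (derivCoeff a) k * z ^ k) P'') :
    2 * z * (1 + z) * P'' + (1 + 2 * z) * P' = 2 * c * P := by
  have hzP'' := hasSum_natCast_mul_mul_pow h₂
  have hθ : HasSum (fun k => derivCoeff (fun j => j * a j) k * z ^ k) (z * P'' + P') := by
    convert hzP''.add h₁ using 1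
    funext k
    simp only [derivCoeff]
    push_cast
    ring
  have hsum : HasSum (fun k => 2 * c * (a k * z ^ k))
      (P' + 2 * (z * P'') + 2 * (z * (z * P'' + P'))) := by
    convert (h₁.add (hzP''.mul_left 2)).add ((hasSum_natCast_mul_mul_pow hθ).mul_left 2) using 1
    funext k
    simp only [derivCoeff]
    linear_combination (-(z ^ k)) * hrec k
  linear_combination (-1 : ℝ) * (h₀.mul_left (2 * c)).unique hsum

end RealPowerSeries

theorem eqOn_zero_of_hasDerivAt_sq_mul {f g : ℝ → ℝ} {c t₀ : ℝ} {s : Set ℝ} (hs : IsOpen s)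
    (hs' : IsPreconnected s) (hf : ∀ t ∈ s, HasDerivAt f (g t) t)
    (hg : ∀ t ∈ s, HasDerivAt g (c ^ 2 * f t) t) (ht₀ : t₀ ∈ s) (hf₀ : f t₀ = 0)
    (hg₀ : g t₀ = 0) : EqOn f 0 s := by
  have hconst {h : ℝ → ℝ} (hh : ∀ t ∈ s, HasDerivAt h 0 t) (h₀ : h t₀ = 0) : EqOn h 0 s :=
    fun t ht => (hs.is_const_of_deriv_eq_zero hs'
      (fun x hx => (hh x hx).differentiableAt.differentiableWithinAt)
      (fun x hx => (hh x hx).deriv) ht ht₀).trans h₀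
  have hminus : EqOn (fun t => (g t - c * f t) * exp (c * t)) 0 s :=
    hconst (fun t ht => by
      refine (((hg t ht).fun_sub ((hf t ht).const_mul c)).fun_mul
        (((hasDerivAt_id' t).const_mul c).exp)).congr_deriv ?_
      ring) (by simp [hf₀, hg₀])
  have hplus : EqOn (fun t => (g t + c * f t) * exp (-(c * t))) 0 s :=
    hconst (fun t ht => by
      refine (((hg t ht).fun_add ((hf t ht).const_mul c)).fun_mul
        (((hasDerivAt_id' t).const_mul c).fun_neg.exp)).congr_deriv ?_
      ring) (by simp [hf₀, hg₀])
  have hg_zero : EqOn g 0 s := fun t ht => by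
    have h₁ := hminus ht
    have h₂ := hplus ht
    simp only [Pi.zero_apply, mul_eq_zero, exp_ne_zero, or_false] at h₁ h₂ ⊢
    linarith
  exact hconst (fun t ht => by simpa [hg_zero ht] using hf t ht) hf₀

theorem eqOn_cosh_of_hasDerivAt_sq_mul {f g : ℝ → ℝ} {c : ℝ} {s : Set ℝ} (hs : IsOpen s)
    (hs' : IsPreconnected s) (hf : ∀ t ∈ s, HasDerivAt f (g t) t)
    (hg : ∀ t ∈ s, HasDerivAt g (c ^ 2 * f t) t) (h₀ : 0 ∈ s) (hf₀ : f 0 = 1) (hg₀ : g 0 = 0) :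
    EqOn f (fun t => cosh (c * t)) s := by
  refine fun t ht => sub_eq_zero.1 (eqOn_zero_of_hasDerivAt_sq_mul (c := c)
    (f := fun t => f t - cosh (c * t)) (g := fun t => g t - c * sinh (c * t)) hs hs'
    (fun t ht => ?_) (fun t ht => ?_) h₀ (by simp [hf₀]) (by simp [hg₀]) ht)
  · refine ((hf t ht).fun_sub ((hasDerivAt_id' t).const_mul c).cosh).congr_deriv ?_
    ring
  · refine ((hg t ht).fun_sub (((hasDerivAt_id' t).const_mul c).sinh.const_mul c)).congr_deriv ?_
    ring

lemma hasDerivAt_comp_sinh_sq {P : ℝ → ℝ} {p t : ℝ} (h : HasDerivAt P p (sinh t ^ 2)) :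
    HasDerivAt (fun t => P (sinh t ^ 2)) (2 * sinh t * cosh t * p) t := by
  refine (h.comp t ((hasDerivAt_sinh t).pow 2)).congr_deriv ?_
  norm_num
  ring

lemma hasDerivAt_sinh_mul_cosh_mul_comp_sinh_sq {P P' : ℝ → ℝ} {p'' c t : ℝ}
    (h : HasDerivAt P' p'' (sinh t ^ 2))
    (hode : 2 * sinh t ^ 2 * (1 + sinh t ^ 2) * p'' + (1 + 2 * sinh t ^ 2) * P' (sinh t ^ 2) =
      2 * c * P (sinh t ^ 2)) :
    HasDerivAt (fun t => 2 * sinh t * cosh t * P' (sinh t ^ 2)) (4 * c * P (sinh t ^ 2)) t := by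
  refine ((((hasDerivAt_sinh t).const_mul 2).fun_mul (hasDerivAt_cosh t)).fun_mul
    (hasDerivAt_comp_sinh_sq h)).congr_deriv ?_
  linear_combination 2 * hode + (2 * P' (sinh t ^ 2) + 4 * sinh t ^ 2 * p'') * Real.cosh_sq t

lemma coshCoeff_succ (r : ℝ) (k : ℕ) :
    coshCoeff r (k + 1) = (r ^ 2 - k ^ 2) * coshCoeff r k := by
  cases k with
  | zero => simp [coshCoeff]
  | succ n =>
    simp only [coshCoeff, Finset.prod_range_succ]
    push_cast
    ring

namespace CoshArsinh

open RealPowerSeries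

noncomputable def coeff (r : ℝ) (k : ℕ) : ℝ :=
  coshCoeff r k * 4 ^ k / (2 * k).factorial

lemma coeff_zero (r : ℝ) : coeff r 0 = 1 := by
  simp [coeff, coshCoeff]

lemma coeff_succ (r : ℝ) (k : ℕ) :
    (k + 1) * (2 * k + 1) * coeff r (k + 1) = 2 * (r ^ 2 - k ^ 2) * coeff r k := by
  rw [coeff, coeff, coshCoeff_succ, show 2 * (k + 1) = 2 * k + 1 + 1 by ring,
    Nat.factorial_succ, Nat.factorial_succ]
  push_cast
  field_simp
  ring

lemma abs_coeff_succ_le {r : ℝ} {k : ℕ} (hk : r ^ 2 ≤ k ^ 2) :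
    |coeff r (k + 1)| ≤ |coeff r k| := by
  have hpos : (0 : ℝ) < (k + 1) * (2 * k + 1) := by positivity
  have h := congrArg abs (coeff_succ r k)
  rw [abs_mul, abs_of_pos hpos, abs_mul, abs_mul, abs_two, abs_of_nonpos (sub_nonpos.2 hk)] at h
  refine le_of_mul_le_mul_left ?_ hpos
  rw [h]
  exact mul_le_mul_of_nonneg_right (by nlinarith [sq_nonneg r]) (abs_nonneg _)

lemma exists_abs_coeff_le (r : ℝ) : ∃ M, ∀ k, |coeff r k| ≤ M := by
  set N := ⌈|r|⌉₊
  set M := ∑ j ∈ Finset.range (N + 1), |coeff r j|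
  have hsmall : ∀ k ≤ N, |coeff r k| ≤ M := fun k hk =>
    Finset.single_le_sum (f := fun j => |coeff r j|) (fun _ _ => abs_nonneg _)
      (Finset.mem_range.2 (Nat.lt_succ_of_le hk))
  refine ⟨M, fun k => ?_⟩
  induction k with
  | zero => exact hsmall 0 (Nat.zero_le N)
  | succ k ih =>
    rcases le_or_gt N k with hk | hk
    · refine (abs_coeff_succ_le ?_).trans ih
      rw [sq_le_sq, Nat.abs_cast]
      exact (Nat.le_ceil _).trans (by exact_mod_cast hk)
    · exact hsmall (k + 1) hk

lemma abs_sinh_sq_lt_one {t : ℝ} (ht : t ∈ Ioo (-arsinh 1) (arsinh 1)) : |sinh t ^ 2| < 1 := by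
  have h : |sinh t| < 1 := by
    rw [abs_sinh, ← sinh_arsinh 1, sinh_lt_sinh]
    exact abs_lt.2 ht
  rw [abs_pow]
  exact pow_lt_one₀ (abs_nonneg _) h two_ne_zero

theorem sum_coeff_sinh_sq_eqOn (r : ℝ) :
    EqOn (fun t => sum (coeff r) (sinh t ^ 2)) (fun t => cosh (2 * r * t))
      (Ioo (-arsinh 1) (arsinh 1)) := by
  obtain ⟨M, hM⟩ := exists_abs_coeff_le r
  have hode {z : ℝ} (hz : |z| < 1) :
      2 * z * (1 + z) * sum (derivCoeff^[2] (coeff r)) z +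
        (1 + 2 * z) * sum (derivCoeff^[1] (coeff r)) z = 2 * r ^ 2 * sum (coeff r) z :=
    hypergeometric_ode_of_hasSum (coeff_succ r) (hasSum_iterate_derivCoeff_mul_pow hM hz 0)
      (hasSum_iterate_derivCoeff_mul_pow hM hz 1) (hasSum_iterate_derivCoeff_mul_pow hM hz 2)
  refine eqOn_cosh_of_hasDerivAt_sq_mul isOpen_Ioo isPreconnected_Ioo
    (g := fun t => 2 * sinh t * cosh t * sum (derivCoeff (coeff r)) (sinh t ^ 2))
    (fun t ht => hasDerivAt_comp_sinh_sq
      (hasDerivAt_sum_iterate_derivCoeff hM (abs_sinh_sq_lt_one ht) 0))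
    (fun t ht => (hasDerivAt_sinh_mul_cosh_mul_comp_sinh_sq
      (hasDerivAt_sum_iterate_derivCoeff hM (abs_sinh_sq_lt_one ht) 1)
      (hode (abs_sinh_sq_lt_one ht))).congr_deriv (by ring))
    ⟨by simp, by simp⟩ (by simp [sum_zero, coeff_zero]) (by simp)

end CoshArsinh

open CoshArsinh RealPowerSeries in
theorem cosh_two_r_arsinh_series (r y : ℝ) (hy : |y| < 1 / 2) :
    HasSum
      (fun k : ℕ => coshCoeff r k * (2 * y) ^ (2 * k) / (Nat.factorial (2 * k) : ℝ))
      (Real.cosh (2 * r * Real.arsinh y)) := by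
  have hy' : arsinh y ∈ Ioo (-arsinh 1) (arsinh 1) := by
    rw [← arsinh_neg, mem_Ioo, arsinh_lt_arsinh, arsinh_lt_arsinh]
    exact abs_lt.1 (by linarith)
  obtain ⟨M, hM⟩ := exists_abs_coeff_le r
  have hsum := hasSum_iterate_derivCoeff_mul_pow hM (abs_sinh_sq_lt_one hy') 0
  have hval := sum_coeff_sinh_sq_eqOn r hy'
  simp only [Function.iterate_zero_apply, sinh_arsinh] at hsum hval
  rw [← hval]
  convert hsum using 1
  funext k
  rw [coeff, mul_pow, pow_mul, pow_mul]
  ring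
end

section
/- For every real r and every real y with |y| sufficiently small (e.g. |y| < 1/2), sinh(2r·arcsinh(y)) = √(1+y²) · Σ_{k=0}^∞ d_k(r) (2y)^{2k+1}/(2k+1)!, where d_k(r) = r · ∏_{j=1}^{k} (r² − j²). -/
open Real Finset

/-- Coefficients `d_k(r) = r ∏_{j=1}^{k} (r² - j²)`. -/
def sinhCoeff (r : ℝ) (k : ℕ) : ℝ :=
  r * ∏ j ∈ Finset.range k, (r ^ 2 - ((j : ℝ) + 1) ^ 2)

namespace SinhSeries

noncomputable def a (r : ℝ) (k : ℕ) : ℝ :=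
  sinhCoeff r k * 2 ^ (2*k+1) / (Nat.factorial (2*k+1) : ℝ)

noncomputable def g0 (r : ℝ) (k : ℕ) (u : ℝ) : ℝ :=
  a r k * (Real.cosh u * Real.sinh u ^ (2*k+1))

noncomputable def g1 (r : ℝ) (k : ℕ) (u : ℝ) : ℝ :=
  a r k * (Real.sinh u ^ (2*k+2) + (2*(k:ℝ)+1) * (Real.sinh u ^ (2*k) * Real.cosh u ^ 2))

noncomputable def g2 (r : ℝ) (k : ℕ) (u : ℝ) : ℝ :=
  a r k * (Real.cosh u * ((2*(k:ℝ)+2)^2 * Real.sinh u ^ (2*k+1)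
    + (2*(k:ℝ))*(2*(k:ℝ)+1) * Real.sinh u ^ (2*k-1)))

noncomputable def T (r : ℝ) (k : ℕ) (u : ℝ) : ℝ :=
  (2*(k:ℝ))*(2*(k:ℝ)+1) * a r k * (Real.cosh u * Real.sinh u ^ (2*k-1))

lemma hasDerivAt_g0 (r : ℝ) (k : ℕ) (u : ℝ) :
    HasDerivAt (fun v => g0 r k v) (g1 r k u) u := by
  have hs := Real.hasDerivAt_sinh u
  have hc := Real.hasDerivAt_cosh u
  have h := (hc.mul (hs.pow (2*k+1))).const_mul (a r k)
  refine h.congr_deriv ?_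
  simp only [g1, Nat.add_sub_cancel, Pi.pow_apply]
  push_cast
  ring

lemma hasDerivAt_g1 (r : ℝ) (k : ℕ) (u : ℝ) :
    HasDerivAt (fun v => g1 r k v) (g2 r k u) u := by
  have hs := Real.hasDerivAt_sinh u
  have hc := Real.hasDerivAt_cosh u
  have h := ((hs.pow (2*k+2)).add
    (((hs.pow (2*k)).mul (hc.pow 2)).const_mul (2*(k:ℝ)+1))).const_mul (a r k)
  refine h.congr_deriv ?_
  simp only [g2, Nat.add_sub_cancel, pow_one, Pi.pow_apply]
  rcases k with _ | k
  · push_cast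
    ring
  · rw [show 2*(k+1)-1 = 2*k+1 by omega]
    push_cast
    rw [Real.cosh_sq u]
    ring

lemma nat_fact_prod (m : ℕ) : ∀ k, m.factorial * ∏ j ∈ range k, (m+j+1) = (m+k).factorial
  | 0 => by simp
  | k+1 => by
    rw [prod_range_succ, ← mul_assoc, nat_fact_prod m k,
      show m+(k+1) = (m+k)+1 by omega, Nat.factorial_succ]
    ring

lemma nat_fact_le (k : ℕ) : ∀ m : ℕ, (m+k).factorial ≤ (m+k)^m * k.factorial
  | 0 => by simp
  | m+1 => by
    rw [show m+1+k = (m+k)+1 by omega, Nat.factorial_succ, pow_succ]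
    calc (m+k+1) * (m+k).factorial ≤ (m+k+1) * ((m+k)^m * k.factorial) :=
          Nat.mul_le_mul_left _ (nat_fact_le k m)
      _ ≤ (m+k+1) * ((m+k+1)^m * k.factorial) := by
          exact Nat.mul_le_mul_left _ (Nat.mul_le_mul_right _ (Nat.pow_le_pow_left (by omega) m))
      _ = (m+k+1)^m * (m+k+1) * k.factorial := by ring
  termination_by m => m

lemma nat_four_pow (k : ℕ) : 4^k * (k.factorial)^2 ≤ (2*k+1).factorial := by
  induction k with
  | zero => simp
  | succ k ih =>
    have h1 : 2*(k+1)+1 = ((2*k+1)+1)+1 := by omega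
    rw [h1, Nat.factorial_succ, Nat.factorial_succ]
    calc 4^(k+1) * ((k+1).factorial)^2 = (2*(k+1))*(2*(k+1)) * (4^k * (k.factorial)^2) := by
          rw [Nat.factorial_succ]; ring
      _ ≤ (2*(k+1))*(2*(k+1)) * (2*k+1).factorial := Nat.mul_le_mul_left _ ih
      _ ≤ ((2*k+1)+1+1) * (((2*k+1)+1) * (2*k+1).factorial) := by
          have : (2*(k+1))*(2*(k+1)) ≤ ((2*k+1)+1+1) * ((2*k+1)+1) := by nlinarith
          calc (2*(k+1))*(2*(k+1)) * (2*k+1).factorial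
              ≤ (((2*k+1)+1+1) * ((2*k+1)+1)) * (2*k+1).factorial :=
                Nat.mul_le_mul_right _ this
            _ = ((2*k+1)+1+1) * (((2*k+1)+1) * (2*k+1).factorial) := by ring

/-- The central coefficient bound. -/
lemma coeff_bound (r : ℝ) (k : ℕ) :
    |sinhCoeff r k| * 4^k / (Nat.factorial (2*k+1) : ℝ)
      ≤ (|r| * ((⌈|r|⌉₊:ℝ)+1)^(2*⌈|r|⌉₊) / (Nat.factorial ⌈|r|⌉₊ : ℝ)^2)
        * ((k:ℝ)+1)^(2*⌈|r|⌉₊) := by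
  set m := ⌈|r|⌉₊ with hm
  clear_value m
  have hrm : |r| ≤ (m:ℝ) := hm ▸ Nat.le_ceil _
  have hfacpos : (0:ℝ) < (Nat.factorial (2*k+1) : ℝ) := by
    exact_mod_cast Nat.factorial_pos _
  have hmfacpos : (0:ℝ) < (Nat.factorial m : ℝ)^2 := by positivity
  rw [div_le_iff₀ hfacpos]
  have key : |sinhCoeff r k| * 4^k * (Nat.factorial m : ℝ)^2
      ≤ |r| * ((m:ℝ)+1)^(2*m) * ((k:ℝ)+1)^(2*m) * (Nat.factorial (2*k+1) : ℝ) := by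
    have h1 : |sinhCoeff r k| ≤ |r| * ∏ j ∈ range k, ((m:ℝ)+(j:ℝ)+1)^2 := by
      rw [sinhCoeff, abs_mul, abs_prod]
      refine mul_le_mul_of_nonneg_left (Finset.prod_le_prod (fun _ _ => abs_nonneg _)
        (fun j _ => ?_)) (abs_nonneg r) |>.trans_eq rfl
      rw [abs_sub_le_iff]
      constructor
      · nlinarith [sq_nonneg ((j:ℝ)+1), abs_nonneg r, sq_abs r,
          Nat.cast_nonneg (α := ℝ) j, Nat.cast_nonneg (α := ℝ) m]
      · nlinarith [sq_abs r, abs_nonneg r, Nat.cast_nonneg (α := ℝ) j,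
          Nat.cast_nonneg (α := ℝ) m]
    have h2 : (Nat.factorial m : ℝ) * ∏ j ∈ range k, ((m:ℝ)+(j:ℝ)+1) = (Nat.factorial (m+k) : ℝ) := by
      have := nat_fact_prod m k
      exact_mod_cast congrArg (Nat.cast (R := ℝ)) this
    have h3 : (Nat.factorial (m+k) : ℝ) ≤ ((m:ℝ)+(k:ℝ))^m * (Nat.factorial k : ℝ) := by
      exact_mod_cast Nat.cast_le.mpr (nat_fact_le k m)
    have h4 : (4:ℝ)^k * (Nat.factorial k : ℝ)^2 ≤ (Nat.factorial (2*k+1) : ℝ) := by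
      exact_mod_cast Nat.cast_le.mpr (nat_four_pow k)
    have h5 : ((m:ℝ)+(k:ℝ)) ≤ ((m:ℝ)+1)*((k:ℝ)+1) := by
      nlinarith [Nat.cast_nonneg (α := ℝ) m, Nat.cast_nonneg (α := ℝ) k]
    have hPnn : (0:ℝ) ≤ ∏ j ∈ range k, ((m:ℝ)+(j:ℝ)+1) :=
      Finset.prod_nonneg fun j _ => by positivity
    have hsq : ∏ j ∈ range k, ((m:ℝ)+(j:ℝ)+1)^2 = (∏ j ∈ range k, ((m:ℝ)+(j:ℝ)+1))^2 := by
      rw [← Finset.prod_pow]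
    calc |sinhCoeff r k| * 4^k * (Nat.factorial m : ℝ)^2
        ≤ (|r| * ∏ j ∈ range k, ((m:ℝ)+(j:ℝ)+1)^2) * 4^k * (Nat.factorial m : ℝ)^2 := by
          apply mul_le_mul_of_nonneg_right (mul_le_mul_of_nonneg_right h1 (by positivity))
            (le_of_lt hmfacpos)
      _ = |r| * ((Nat.factorial m : ℝ) * ∏ j ∈ range k, ((m:ℝ)+(j:ℝ)+1))^2 * 4^k := by
          rw [hsq]; ring
      _ = |r| * (Nat.factorial (m+k) : ℝ)^2 * 4^k := by rw [h2]
      _ ≤ |r| * (((m:ℝ)+(k:ℝ))^m * (Nat.factorial k : ℝ))^2 * 4^k := by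
          apply mul_le_mul_of_nonneg_right (mul_le_mul_of_nonneg_left
            (pow_le_pow_left₀ (by positivity) h3 2) (abs_nonneg r)) (by positivity)
      _ = |r| * ((m:ℝ)+(k:ℝ))^(2*m) * ((4:ℝ)^k * (Nat.factorial k : ℝ)^2) := by
          rw [mul_pow, ← pow_mul]; ring_nf
      _ ≤ |r| * ((m:ℝ)+(k:ℝ))^(2*m) * (Nat.factorial (2*k+1) : ℝ) := by
          apply mul_le_mul_of_nonneg_left h4 (by positivity)
      _ ≤ |r| * (((m:ℝ)+1)*((k:ℝ)+1))^(2*m) * (Nat.factorial (2*k+1) : ℝ) := by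
          apply mul_le_mul_of_nonneg_right (mul_le_mul_of_nonneg_left
            (pow_le_pow_left₀ (by positivity) h5 _) (abs_nonneg r)) (le_of_lt hfacpos)
      _ = |r| * ((m:ℝ)+1)^(2*m) * ((k:ℝ)+1)^(2*m) * (Nat.factorial (2*k+1) : ℝ) := by
          rw [mul_pow]; ring
  calc |sinhCoeff r k| * 4^k
      = |sinhCoeff r k| * 4^k * (Nat.factorial m : ℝ)^2 / (Nat.factorial m : ℝ)^2 := by
        field_simp
    _ ≤ |r| * ((m:ℝ)+1)^(2*m) * ((k:ℝ)+1)^(2*m) * (Nat.factorial (2*k+1) : ℝ)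
          / (Nat.factorial m : ℝ)^2 := by
        gcongr
    _ = |r| * ((m:ℝ)+1)^(2*m) / (Nat.factorial m : ℝ)^2 * ((k:ℝ)+1)^(2*m)
          * (Nat.factorial (2*k+1) : ℝ) := by ring

set_option maxHeartbeats 1000000 in
/-- Master summability lemma. -/
lemma master (r : ℝ) (p : ℕ) :
    Summable (fun k : ℕ => |sinhCoeff r k| * 4^k / (Nat.factorial (2*k+1) : ℝ)
      * ((k:ℝ)+1)^p * (9/16)^k) := by
  set m := ⌈|r|⌉₊ with hm
  clear_value m
  set C := |r| * ((m:ℝ)+1)^(2*m) / (Nat.factorial m : ℝ)^2 with hC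
  have hCnn : 0 ≤ C := by positivity
  have hgeo : Summable (fun k : ℕ => C * (((k:ℝ)+1)^(2*m+p) * (9/16)^k)) := by
    apply Summable.mul_left
    have h0 : Summable (fun n : ℕ => ((n:ℝ))^(2*m+p) * (9/16)^n) := by
      apply summable_pow_mul_geometric_of_norm_lt_one
      rw [Real.norm_eq_abs, abs_of_nonneg (by norm_num)]; norm_num
    have h1 : Summable (fun n : ℕ => (((n+1:ℕ)):ℝ)^(2*m+p) * (9/16)^(n+1)) :=
      (summable_nat_add_iff 1).mpr h0
    have h2 := h1.mul_left ((16:ℝ)/9)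
    apply h2.congr
    intro n
    push_cast
    ring
  apply Summable.of_nonneg_of_le (fun k => by positivity) _ hgeo
  intro k
  have hb := coeff_bound r k
  rw [← hm] at hb
  have h1 : ((k:ℝ)+1)^p * (9/16)^k ≥ 0 := by positivity
  calc |sinhCoeff r k| * 4^k / (Nat.factorial (2*k+1) : ℝ) * ((k:ℝ)+1)^p * (9/16)^k
      ≤ C * ((k:ℝ)+1)^(2*m) * ((k:ℝ)+1)^p * (9/16)^k := by
        apply mul_le_mul_of_nonneg_right (mul_le_mul_of_nonneg_right hb (by positivity))
          (by positivity)
    _ = C * (((k:ℝ)+1)^(2*m+p) * (9/16)^k) := by rw [pow_add]; ring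


lemma a_succ (r : ℝ) (k : ℕ) :
    a r (k+1) * ((2*(k:ℝ)+2)*(2*(k:ℝ)+3)) = 4*(r^2 - ((k:ℝ)+1)^2) * a r k := by
  have hfac : (Nat.factorial (2*(k+1)+1) : ℝ)
      = ((2*(k:ℝ)+3)*(2*(k:ℝ)+2)) * (Nat.factorial (2*k+1) : ℝ) := by
    rw [show 2*(k+1)+1 = ((2*k+1)+1)+1 by omega, Nat.factorial_succ, Nat.factorial_succ]
    push_cast; ring
  have hne : (Nat.factorial (2*k+1) : ℝ) ≠ 0 := by
    exact_mod_cast (Nat.factorial_pos (2*k+1)).ne'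
  unfold a sinhCoeff
  rw [prod_range_succ, hfac]
  have h2 : (2:ℝ) ^ (2*(k+1)+1) = 4 * 2 ^ (2*k+1) := by
    rw [show 2*(k+1)+1 = (2*k+1)+2 by omega, pow_add]; ring
  rw [h2]
  push_cast
  field_simp

lemma g2_eq (r : ℝ) (k : ℕ) (u : ℝ) :
    g2 r k u = 4*r^2 * g0 r k u + (T r k u - T r (k+1) u) := by
  have h := a_succ r k
  rcases k with _ | k
  · simp only [g2, g0, T]
    push_cast at h ⊢
    norm_num
    linear_combination (Real.cosh u * Real.sinh u) * h
  · simp only [g2, g0, T]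
    rw [show 2*(k+1)-1 = 2*k+1 by omega, show 2*(k+1+1)-1 = 2*(k+1)+1 by omega]
    push_cast at h ⊢
    linear_combination (Real.cosh u * Real.sinh u ^ (2*(k+1)+1)) * h

noncomputable def B (r : ℝ) (k : ℕ) : ℝ :=
  |sinhCoeff r k| * 4^k / (Nat.factorial (2*k+1) : ℝ) * (9/16)^k

lemma B_nonneg (r : ℝ) (k : ℕ) : 0 ≤ B r k := by unfold B; positivity

lemma summable_B_mul (r : ℝ) (p : ℕ) : Summable (fun k => B r k * ((k:ℝ)+1)^p) := by
  have := master r p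
  apply this.congr
  intro k
  unfold B
  ring

lemma abs_a_pow (r : ℝ) (k : ℕ) : |a r k| * (3/4:ℝ)^(2*k) = 2 * B r k := by
  have h1 : |a r k| = |sinhCoeff r k| * 2^(2*k+1) / (Nat.factorial (2*k+1) : ℝ) := by
    rw [a, abs_div, abs_mul, abs_pow]
    simp [abs_of_nonneg, Nat.cast_nonneg]
  rw [h1, B]
  have h2 : (2:ℝ)^(2*k+1) = 2 * 4^k := by
    rw [pow_succ', pow_mul]; norm_num
  have h3 : (3/4:ℝ)^(2*k) = (9/16)^k := by
    rw [pow_mul]; norm_num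
  rw [h2, h3]
  ring

variable {u : ℝ}

lemma bound_g0 (r : ℝ) (k : ℕ) (hs : |Real.sinh u| ≤ 3/4) (hc : Real.cosh u ≤ 5/4) :
    ‖g0 r k u‖ ≤ 2 * B r k := by
  have hcnn : (0:ℝ) ≤ Real.cosh u := (Real.cosh_pos u).le
  have hp : |Real.sinh u|^(2*k+1) ≤ (3/4:ℝ)^(2*k+1) :=
    pow_le_pow_left₀ (abs_nonneg _) hs _
  have hBnn := B_nonneg r k
  have h2B := abs_a_pow r k
  rw [Real.norm_eq_abs, g0, abs_mul, abs_mul, abs_pow, abs_of_nonneg hcnn]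
  calc |a r k| * (Real.cosh u * |Real.sinh u|^(2*k+1))
      ≤ |a r k| * ((5/4) * (3/4:ℝ)^(2*k+1)) := by
        apply mul_le_mul_of_nonneg_left _ (abs_nonneg _)
        exact mul_le_mul hc hp (by positivity) (by norm_num)
    _ = (15/16) * (|a r k| * (3/4:ℝ)^(2*k)) := by rw [pow_succ]; ring
    _ = (15/16) * (2 * B r k) := by rw [h2B]
    _ ≤ 2 * B r k := by nlinarith

lemma bound_g1 (r : ℝ) (k : ℕ) (hs : |Real.sinh u| ≤ 3/4) (hc : Real.cosh u ≤ 5/4) :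
    ‖g1 r k u‖ ≤ 8 * (B r k * ((k:ℝ)+1)) := by
  have hcnn : (0:ℝ) ≤ Real.cosh u := (Real.cosh_pos u).le
  have hBnn := B_nonneg r k
  have h2B := abs_a_pow r k
  have hp1 : |Real.sinh u|^(2*k+2) ≤ (3/4:ℝ)^(2*k+2) := pow_le_pow_left₀ (abs_nonneg _) hs _
  have hp2 : |Real.sinh u|^(2*k) ≤ (3/4:ℝ)^(2*k) := pow_le_pow_left₀ (abs_nonneg _) hs _
  have hc2 : Real.cosh u ^ 2 ≤ 25/16 := by nlinarith
  have hinner : |Real.sinh u ^ (2*k+2) + (2*(k:ℝ)+1) * (Real.sinh u ^ (2*k) * Real.cosh u ^ 2)|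
      ≤ (3/4:ℝ)^(2*k) * (4*((k:ℝ)+1)) := by
    have t1 : |Real.sinh u ^ (2*k+2)| ≤ (3/4:ℝ)^(2*k+2) := by rw [abs_pow]; exact hp1
    have t2 : |(2*(k:ℝ)+1) * (Real.sinh u ^ (2*k) * Real.cosh u ^ 2)|
        ≤ (2*(k:ℝ)+1) * ((3/4:ℝ)^(2*k) * (25/16)) := by
      rw [abs_mul, abs_mul, abs_pow]
      have hk : |(2*(k:ℝ)+1)| = 2*(k:ℝ)+1 := abs_of_nonneg (by positivity)
      have hcabs : |Real.cosh u ^ 2| = Real.cosh u ^ 2 := abs_of_nonneg (by positivity)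
      rw [hk, hcabs]
      apply mul_le_mul_of_nonneg_left _ (by positivity)
      exact mul_le_mul hp2 hc2 (by positivity) (by positivity)
    have t3 : (3/4:ℝ)^(2*k+2) = (3/4:ℝ)^(2*k) * (9/16) := by rw [pow_add]; norm_num
    have hpow : (0:ℝ) ≤ (3/4:ℝ)^(2*k) := by positivity
    calc |Real.sinh u ^ (2*k+2) + (2*(k:ℝ)+1) * (Real.sinh u ^ (2*k) * Real.cosh u ^ 2)|
        ≤ |Real.sinh u ^ (2*k+2)| + |(2*(k:ℝ)+1) * (Real.sinh u ^ (2*k) * Real.cosh u ^ 2)| :=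
          abs_add_le _ _
      _ ≤ (3/4:ℝ)^(2*k+2) + (2*(k:ℝ)+1) * ((3/4:ℝ)^(2*k) * (25/16)) := add_le_add t1 t2
      _ ≤ (3/4:ℝ)^(2*k) * (4*((k:ℝ)+1)) := by rw [t3]; nlinarith [Nat.cast_nonneg (α := ℝ) k]
  rw [Real.norm_eq_abs, g1, abs_mul]
  calc |a r k| * |Real.sinh u ^ (2*k+2) + (2*(k:ℝ)+1) * (Real.sinh u ^ (2*k) * Real.cosh u ^ 2)|
      ≤ |a r k| * ((3/4:ℝ)^(2*k) * (4*((k:ℝ)+1))) :=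
        mul_le_mul_of_nonneg_left hinner (abs_nonneg _)
    _ = (|a r k| * (3/4:ℝ)^(2*k)) * (4*((k:ℝ)+1)) := by ring
    _ = 2 * B r k * (4*((k:ℝ)+1)) := by rw [h2B]
    _ = 8 * (B r k * ((k:ℝ)+1)) := by ring

lemma pow_sub_one_le (k : ℕ) : (3/4:ℝ)^(2*k-1) ≤ (4/3) * (3/4:ℝ)^(2*k) := by
  rcases k with _ | k
  · norm_num
  · rw [show 2*(k+1)-1 = 2*k+1 by omega, show 2*(k+1) = (2*k+1)+1 by omega]
    have h : (4/3:ℝ)*(3/4:ℝ)^((2*k+1)+1) = (3/4:ℝ)^(2*k+1) := by rw [pow_succ]; ring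
    exact le_of_eq h.symm

lemma bound_g2 (r : ℝ) (k : ℕ) (hs : |Real.sinh u| ≤ 3/4) (hc : Real.cosh u ≤ 5/4) :
    ‖g2 r k u‖ ≤ 24 * (B r k * ((k:ℝ)+1)^2) := by
  have hcnn : (0:ℝ) ≤ Real.cosh u := (Real.cosh_pos u).le
  have hBnn := B_nonneg r k
  have h2B := abs_a_pow r k
  have hknn : (0:ℝ) ≤ (k:ℝ) := Nat.cast_nonneg k
  have hp1 : |Real.sinh u|^(2*k+1) ≤ (3/4:ℝ)^(2*k+1) := pow_le_pow_left₀ (abs_nonneg _) hs _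
  have hp2 : |Real.sinh u|^(2*k-1) ≤ (3/4:ℝ)^(2*k-1) := pow_le_pow_left₀ (abs_nonneg _) hs _
  have t3 : (3/4:ℝ)^(2*k+1) ≤ (3/4:ℝ)^(2*k) := by
    rw [pow_succ]
    have : (0:ℝ) ≤ (3/4:ℝ)^(2*k) := by positivity
    nlinarith
  have t4 := pow_sub_one_le k
  have hpow : (0:ℝ) ≤ (3/4:ℝ)^(2*k) := by positivity
  have hinner : |(2*(k:ℝ)+2)^2 * Real.sinh u ^ (2*k+1)
      + (2*(k:ℝ))*(2*(k:ℝ)+1) * Real.sinh u ^ (2*k-1)|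
      ≤ (3/4:ℝ)^(2*k) * ((48/5)*((k:ℝ)+1)^2) := by
    have t1 : |(2*(k:ℝ)+2)^2 * Real.sinh u ^ (2*k+1)| ≤ (2*(k:ℝ)+2)^2 * (3/4:ℝ)^(2*k) := by
      rw [abs_mul, abs_of_nonneg (by positivity : (0:ℝ) ≤ (2*(k:ℝ)+2)^2), abs_pow]
      exact mul_le_mul_of_nonneg_left (hp1.trans t3) (by positivity)
    have t2 : |(2*(k:ℝ))*(2*(k:ℝ)+1) * Real.sinh u ^ (2*k-1)|
        ≤ (2*(k:ℝ))*(2*(k:ℝ)+1) * ((4/3) * (3/4:ℝ)^(2*k)) := by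
      have hk2 : (0:ℝ) ≤ 2*(k:ℝ) := mul_nonneg (by norm_num) hknn
      have h5 : (0:ℝ) ≤ 2*(k:ℝ)+1 := by positivity
      rw [abs_mul, abs_mul, abs_of_nonneg hk2, abs_of_nonneg h5, abs_pow]
      exact mul_le_mul_of_nonneg_left (hp2.trans t4) (mul_nonneg hk2 h5)
    calc |(2*(k:ℝ)+2)^2 * Real.sinh u ^ (2*k+1)
        + (2*(k:ℝ))*(2*(k:ℝ)+1) * Real.sinh u ^ (2*k-1)|
        ≤ |(2*(k:ℝ)+2)^2 * Real.sinh u ^ (2*k+1)|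
          + |(2*(k:ℝ))*(2*(k:ℝ)+1) * Real.sinh u ^ (2*k-1)| := abs_add_le _ _
      _ ≤ (2*(k:ℝ)+2)^2 * (3/4:ℝ)^(2*k)
          + (2*(k:ℝ))*(2*(k:ℝ)+1) * ((4/3) * (3/4:ℝ)^(2*k)) := add_le_add t1 t2
      _ ≤ (3/4:ℝ)^(2*k) * ((48/5)*((k:ℝ)+1)^2) := by nlinarith
  rw [Real.norm_eq_abs, g2, abs_mul, abs_mul, abs_of_nonneg hcnn]
  calc |a r k| * (Real.cosh u * |(2*(k:ℝ)+2)^2 * Real.sinh u ^ (2*k+1)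
        + (2*(k:ℝ))*(2*(k:ℝ)+1) * Real.sinh u ^ (2*k-1)|)
      ≤ |a r k| * ((5/4) * ((3/4:ℝ)^(2*k) * ((48/5)*((k:ℝ)+1)^2))) := by
        apply mul_le_mul_of_nonneg_left _ (abs_nonneg _)
        exact mul_le_mul hc hinner (abs_nonneg _) (by norm_num)
    _ = (|a r k| * (3/4:ℝ)^(2*k)) * (12*((k:ℝ)+1)^2) := by ring
    _ = 2 * B r k * (12*((k:ℝ)+1)^2) := by rw [h2B]
    _ = 24 * (B r k * ((k:ℝ)+1)^2) := by ring

lemma bound_T (r : ℝ) (k : ℕ) (hs : |Real.sinh u| ≤ 3/4) (hc : Real.cosh u ≤ 5/4) :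
    ‖T r k u‖ ≤ 24 * (B r k * ((k:ℝ)+1)^2) := by
  have hcnn : (0:ℝ) ≤ Real.cosh u := (Real.cosh_pos u).le
  have hBnn := B_nonneg r k
  have h2B := abs_a_pow r k
  have hknn : (0:ℝ) ≤ (k:ℝ) := Nat.cast_nonneg k
  have hk2 : (0:ℝ) ≤ 2*(k:ℝ) := mul_nonneg (by norm_num) hknn
  have hp2 : |Real.sinh u|^(2*k-1) ≤ (3/4:ℝ)^(2*k-1) := pow_le_pow_left₀ (abs_nonneg _) hs _
  have t4 := pow_sub_one_le k
  have hpow : (0:ℝ) ≤ (3/4:ℝ)^(2*k) := by positivity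
  have hstep : Real.cosh u * |Real.sinh u|^(2*k-1) ≤ (5/4) * ((4/3) * (3/4:ℝ)^(2*k)) :=
    mul_le_mul hc (hp2.trans t4) (by positivity) (by norm_num)
  have h1 : ‖T r k u‖ = 2*(k:ℝ)*(2*(k:ℝ)+1) * |a r k| * (Real.cosh u * |Real.sinh u|^(2*k-1)) := by
    rw [Real.norm_eq_abs, T, abs_mul, abs_mul, abs_mul (Real.cosh u), abs_pow,
      abs_of_nonneg hcnn,
      abs_of_nonneg (mul_nonneg hk2 (by positivity : (0:ℝ) ≤ 2*(k:ℝ)+1))]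
  rw [h1]
  calc 2*(k:ℝ)*(2*(k:ℝ)+1) * |a r k| * (Real.cosh u * |Real.sinh u|^(2*k-1))
      ≤ 2*(k:ℝ)*(2*(k:ℝ)+1) * |a r k| * ((5/4) * ((4/3) * (3/4:ℝ)^(2*k))) := by
        apply mul_le_mul_of_nonneg_left hstep
        exact mul_nonneg (mul_nonneg hk2 (by positivity)) (abs_nonneg _)
    _ = (2*(k:ℝ)) * (2*(k:ℝ)+1) * (5/3) * (|a r k| * (3/4:ℝ)^(2*k)) := by ring
    _ = (2*(k:ℝ)) * (2*(k:ℝ)+1) * (5/3) * (2 * B r k) := by rw [h2B]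
    _ ≤ 24 * (B r k * ((k:ℝ)+1)^2) := by nlinarith


lemma sqrt_2516 : Real.sqrt (1+(3/4:ℝ)^2) = 5/4 := by
  rw [show (1+(3/4:ℝ)^2) = (5/4)^2 by norm_num]
  exact Real.sqrt_sq (by norm_num)

set_option maxHeartbeats 2000000 in
theorem main (r y : ℝ) (hy : |y| < 1 / 2) :
    HasSum
      (fun k : ℕ =>
        Real.sqrt (1 + y ^ 2) * sinhCoeff r k * (2 * y) ^ (2 * k + 1) /
          (Nat.factorial (2 * k + 1) : ℝ))
      (Real.sinh (2 * r * Real.arsinh y)) := by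
  classical
  set R : ℝ := Real.arsinh (3/4) with hRdef
  set s : Set ℝ := Set.Ioo (-R) R with hsdef
  have hRpos : 0 < R := by
    rw [hRdef, ← Real.arsinh_zero]
    exact Real.arsinh_lt_arsinh.mpr (by norm_num)
  have hopen : IsOpen s := isOpen_Ioo
  have hconn : IsPreconnected s := (convex_Ioo _ _).isPreconnected
  have h0mem : (0:ℝ) ∈ s := ⟨by linarith, hRpos⟩
  have hbounds : ∀ u ∈ s, |Real.sinh u| ≤ 3/4 ∧ Real.cosh u ≤ 5/4 := by
    intro u hu
    obtain ⟨hu1, hu2⟩ := hu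
    have habs : |u| ≤ R := abs_le.mpr ⟨by linarith, hu2.le⟩
    constructor
    · rw [Real.abs_sinh]
      calc Real.sinh |u| ≤ Real.sinh R := Real.sinh_le_sinh.mpr habs
        _ = 3/4 := by rw [hRdef, Real.sinh_arsinh]
    · have h1 : Real.cosh u ≤ Real.cosh R := by
        rw [Real.cosh_le_cosh]
        rwa [abs_of_nonneg hRpos.le]
      calc Real.cosh u ≤ Real.cosh R := h1
        _ = 5/4 := by rw [hRdef, Real.cosh_arsinh, sqrt_2516]
  -- summable majorants
  have hU0 : Summable (fun k => 2 * B r k) := by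
    apply Summable.mul_left
    apply (summable_B_mul r 0).congr
    intro k; simp
  have hU1 : Summable (fun k => 8 * (B r k * ((k:ℝ)+1))) := by
    apply Summable.mul_left
    apply (summable_B_mul r 1).congr
    intro k; simp
  have hU2 : Summable (fun k => 24 * (B r k * ((k:ℝ)+1)^2)) :=
    (summable_B_mul r 2).mul_left 24
  -- summability of the series at points of s
  have hsum0 : ∀ u ∈ s, Summable (fun k => g0 r k u) := fun u hu =>
    Summable.of_norm_bounded hU0 (fun k => bound_g0 r k (hbounds u hu).1 (hbounds u hu).2)
  have hsum1 : ∀ u ∈ s, Summable (fun k => g1 r k u) := fun u hu =>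
    Summable.of_norm_bounded hU1 (fun k => bound_g1 r k (hbounds u hu).1 (hbounds u hu).2)
  have hsumT : ∀ u ∈ s, Summable (fun k => T r k u) := fun u hu =>
    Summable.of_norm_bounded hU2 (fun k => bound_T r k (hbounds u hu).1 (hbounds u hu).2)
  -- termwise derivatives
  have hS : ∀ u ∈ s, HasDerivAt (fun v => ∑' k, g0 r k v) (∑' k, g1 r k u) u := by
    intro u hu
    exact hasDerivAt_tsum_of_isPreconnected hU1 hopen hconn
      (fun k v _ => hasDerivAt_g0 r k v)
      (fun k v hv => bound_g1 r k (hbounds v hv).1 (hbounds v hv).2)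
      h0mem (hsum0 0 h0mem) hu
  have hS1 : ∀ u ∈ s, HasDerivAt (fun v => ∑' k, g1 r k v) (∑' k, g2 r k u) u := by
    intro u hu
    exact hasDerivAt_tsum_of_isPreconnected hU2 hopen hconn
      (fun k v _ => hasDerivAt_g1 r k v)
      (fun k v hv => bound_g2 r k (hbounds v hv).1 (hbounds v hv).2)
      h0mem (hsum1 0 h0mem) hu
  -- the ODE
  have hT0 : ∀ u : ℝ, T r 0 u = 0 := by intro u; simp [T]
  have hODE : ∀ u ∈ s, (∑' k, g2 r k u) = 4*r^2 * ∑' k, g0 r k u := by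
    intro u hu
    have hTs : Summable (fun k => T r k u) := hsumT u hu
    have hTs' : Summable (fun k => T r (k+1) u) := (summable_nat_add_iff 1).mpr hTs
    have hsub : Summable (fun k => T r k u - T r (k+1) u) := hTs.sub hTs'
    have htel : HasSum (fun k => T r k u - T r (k+1) u) (T r 0 u) := by
      rw [hasSum_iff_tendsto_nat_of_summable_norm (summable_norm_iff.mpr hsub)]
      have hpart : ∀ n, ∑ i ∈ Finset.range n, (T r i u - T r (i+1) u) = T r 0 u - T r n u :=
        fun n => Finset.sum_range_sub' (fun i => T r i u) n
      simp only [hpart]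
      simpa using tendsto_const_nhds.sub hTs.tendsto_atTop_zero
    calc (∑' k, g2 r k u)
        = ∑' k, (4*r^2 * g0 r k u + (T r k u - T r (k+1) u)) :=
          tsum_congr (fun k => g2_eq r k u)
      _ = (∑' k, 4*r^2 * g0 r k u) + ∑' k, (T r k u - T r (k+1) u) :=
          Summable.tsum_add ((hsum0 u hu).mul_left _) htel.summable
      _ = 4*r^2 * (∑' k, g0 r k u) + T r 0 u := by rw [tsum_mul_left, htel.tsum_eq]
      _ = 4*r^2 * ∑' k, g0 r k u := by rw [hT0]; ring
  -- derivatives of sinh (2 r ·)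
  have hlin : ∀ v : ℝ, HasDerivAt (fun w : ℝ => 2*r*w) (2*r) v := by
    intro v
    simpa using (hasDerivAt_id v).const_mul (2*r)
  have hsinh' : ∀ v : ℝ, HasDerivAt (fun w => Real.sinh (2*r*w)) (2*r*Real.cosh (2*r*v)) v := by
    intro v
    have h := (Real.hasDerivAt_sinh (2*r*v)).comp v (hlin v)
    refine h.congr_deriv ?_
    ring
  have hcosh' : ∀ v : ℝ,
      HasDerivAt (fun w => 2*r*Real.cosh (2*r*w)) (4*r^2*Real.sinh (2*r*v)) v := by
    intro v
    have := (((Real.hasDerivAt_cosh (2*r*v)).comp v (hlin v)).const_mul (2*r))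
    refine this.congr_deriv ?_
    ring
  -- the difference function and its vector version
  have hh' : ∀ u ∈ s, HasDerivAt (fun v => (∑' k, g0 r k v) - Real.sinh (2*r*v))
      ((∑' k, g1 r k u) - 2*r*Real.cosh (2*r*u)) u :=
    fun u hu => (hS u hu).sub (hsinh' u)
  have hh1' : ∀ u ∈ s, HasDerivAt (fun v => (∑' k, g1 r k v) - 2*r*Real.cosh (2*r*v))
      (4*r^2 * ((∑' k, g0 r k u) - Real.sinh (2*r*u))) u := by
    intro u hu
    have := (hS1 u hu).sub (hcosh' u)
    rw [hODE u hu] at this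
    refine this.congr_deriv ?_
    ring
  have hF : ∀ u ∈ s, HasDerivAt
      (fun v => (((∑' k, g0 r k v) - Real.sinh (2*r*v)),
        ((∑' k, g1 r k v) - 2*r*Real.cosh (2*r*v))))
      ((((∑' k, g1 r k u) - 2*r*Real.cosh (2*r*u)),
        (4*r^2 * ((∑' k, g0 r k u) - Real.sinh (2*r*u))))) u :=
    fun u hu => (hh' u hu).prodMk (hh1' u hu)
  -- initial conditions
  have hS0 : (∑' k, g0 r k (0:ℝ)) = 0 := by
    have : ∀ k : ℕ, g0 r k (0:ℝ) = 0 := by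
      intro k
      simp [g0, Real.sinh_zero, zero_pow (by omega : 2*k+1 ≠ 0)]
    rw [tsum_congr this, tsum_zero]
  have hS10 : (∑' k, g1 r k (0:ℝ)) = 2*r := by
    have h1 : ∀ k : ℕ, k ≠ 0 → g1 r k (0:ℝ) = 0 := by
      intro k hk
      simp [g1, Real.sinh_zero, zero_pow (by omega : 2*k+2 ≠ 0),
        zero_pow (by omega : 2*k ≠ 0)]
    rw [tsum_eq_single 0 h1]
    simp [g1, a, sinhCoeff]
    ring
  -- Gronwall on [0, b]
  set b : ℝ := |Real.arsinh y| with hbdef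
  have hbnn : 0 ≤ b := abs_nonneg _
  have habs_ar : |Real.arsinh y| = Real.arsinh |y| := by
    rcases le_or_gt 0 y with hy0 | hy0
    · rw [abs_of_nonneg hy0, abs_of_nonneg (Real.arsinh_nonneg_iff.mpr hy0)]
    · rw [abs_of_neg hy0, abs_of_nonpos (Real.arsinh_nonpos_iff.mpr hy0.le), Real.arsinh_neg]
  have hbR : b < R := by
    rw [hbdef, habs_ar, hRdef]
    exact Real.arsinh_lt_arsinh.mpr (lt_trans hy (by norm_num))
  have hsubset : Set.Icc (0:ℝ) b ⊆ s := by
    intro x hx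
    exact ⟨by linarith [hx.1], lt_of_le_of_lt hx.2 hbR⟩
  set K : ℝ := max 1 (4*r^2) with hKdef
  have hK1 : (1:ℝ) ≤ K := le_max_left _ _
  have hK2 : 4*r^2 ≤ K := le_max_right _ _
  have hgron := norm_le_gronwallBound_of_norm_deriv_right_le
    (f := fun v => (((∑' k, g0 r k v) - Real.sinh (2*r*v)),
        ((∑' k, g1 r k v) - 2*r*Real.cosh (2*r*v))))
    (f' := fun u => ((((∑' k, g1 r k u) - 2*r*Real.cosh (2*r*u)),
        (4*r^2 * ((∑' k, g0 r k u) - Real.sinh (2*r*u))))))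
    (δ := 0) (K := K) (ε := 0) (a := 0) (b := b)
    (fun x hx => ((hF x (hsubset hx)).continuousAt).continuousWithinAt)
    (fun x hx => (hF x (hsubset ⟨hx.1, hx.2.le⟩)).hasDerivWithinAt)
    (by
      simp only [Real.sinh_zero, Real.cosh_zero, mul_zero, mul_one, hS0, hS10]
      norm_num [Prod.norm_def])
    (by
      intro x hx
      have hxs := hsubset ⟨hx.1, hx.2.le⟩
      rw [Prod.norm_def, Prod.norm_def]
      simp only [add_zero]
      apply max_le
      · calc ‖(∑' k, g1 r k x) - 2*r*Real.cosh (2*r*x)‖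
            ≤ max ‖(∑' k, g0 r k x) - Real.sinh (2*r*x)‖
                ‖(∑' k, g1 r k x) - 2*r*Real.cosh (2*r*x)‖ := le_max_right _ _
          _ ≤ K * max ‖(∑' k, g0 r k x) - Real.sinh (2*r*x)‖
                ‖(∑' k, g1 r k x) - 2*r*Real.cosh (2*r*x)‖ := by
              apply le_mul_of_one_le_left _ hK1
              exact le_max_of_le_left (norm_nonneg _)
      · rw [norm_mul]
        calc ‖4*r^2‖ * ‖(∑' k, g0 r k x) - Real.sinh (2*r*x)‖
            ≤ K * ‖(∑' k, g0 r k x) - Real.sinh (2*r*x)‖ := by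
              apply mul_le_mul_of_nonneg_right _ (norm_nonneg _)
              rw [Real.norm_eq_abs, abs_of_nonneg (by positivity)]
              exact hK2
          _ ≤ K * max ‖(∑' k, g0 r k x) - Real.sinh (2*r*x)‖
                ‖(∑' k, g1 r k x) - 2*r*Real.cosh (2*r*x)‖ := by
              apply mul_le_mul_of_nonneg_left (le_max_left _ _) (le_trans zero_le_one hK1)
      )
  have hzero : ∀ x ∈ Set.Icc (0:ℝ) b, (∑' k, g0 r k x) = Real.sinh (2*r*x) := by
    intro x hx
    have := hgron x hx
    rw [gronwallBound_ε0_δ0] at this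
    have hnorm0 : ‖(((∑' k, g0 r k x) - Real.sinh (2*r*x)),
        ((∑' k, g1 r k x) - 2*r*Real.cosh (2*r*x)))‖ = 0 :=
      le_antisymm this (norm_nonneg _)
    rw [norm_eq_zero] at hnorm0
    have h1 := congrArg Prod.fst hnorm0
    simp only [Prod.fst_zero] at h1
    linarith [h1]
  -- conclude the value at arsinh y
  have hmemu : Real.arsinh y ∈ s := by
    constructor
    · have : -b ≤ Real.arsinh y := neg_abs_le _
      linarith
    · exact lt_of_le_of_lt (le_abs_self _) hbR
  have hval : (∑' k, g0 r k (Real.arsinh y)) = Real.sinh (2*r*Real.arsinh y) := by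
    rcases le_or_gt 0 (Real.arsinh y) with hpos | hneg
    · exact hzero _ ⟨hpos, le_abs_self _⟩
    · have hmem : -Real.arsinh y ∈ Set.Icc (0:ℝ) b := ⟨by linarith, neg_le_abs _⟩
      have h1 := hzero _ hmem
      have hodd : (∑' k, g0 r k (-(Real.arsinh y))) = -(∑' k, g0 r k (Real.arsinh y)) := by
        rw [← tsum_neg]
        apply tsum_congr
        intro k
        simp only [g0, Real.sinh_neg, Real.cosh_neg]
        rw [Odd.neg_pow ⟨k, by ring⟩]
        ring
      rw [hodd] at h1
      have : Real.sinh (2*r*(-(Real.arsinh y))) = -Real.sinh (2*r*Real.arsinh y) := by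
        rw [mul_neg, Real.sinh_neg]
      rw [this] at h1
      linarith
  have hsumu : Summable (fun k => g0 r k (Real.arsinh y)) := hsum0 _ hmemu
  have hterm_eq : (fun k : ℕ =>
      Real.sqrt (1 + y ^ 2) * sinhCoeff r k * (2 * y) ^ (2 * k + 1) /
        (Nat.factorial (2 * k + 1) : ℝ)) = fun k => g0 r k (Real.arsinh y) := by
    funext k
    rw [g0, a]
    have h1 : Real.sqrt (1+y^2) = Real.cosh (Real.arsinh y) := (Real.cosh_arsinh y).symm
    have h2 : (2*y)^(2*k+1) = 2^(2*k+1) * Real.sinh (Real.arsinh y)^(2*k+1) := by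
      rw [mul_pow, Real.sinh_arsinh]
    rw [h1, h2]
    ring
  rw [hterm_eq]
  have H := hsumu.hasSum
  rwa [hval] at H

end SinhSeries

theorem sinh_two_r_arsinh_series (r y : ℝ) (hy : |y| < 1 / 2) :
    HasSum
      (fun k : ℕ =>
        Real.sqrt (1 + y ^ 2) * sinhCoeff r k * (2 * y) ^ (2 * k + 1) /
          (Nat.factorial (2 * k + 1) : ℝ))
      (Real.sinh (2 * r * Real.arsinh y)) := SinhSeries.main r y hy
end

section
/- Let f : ℝ → ℝ be six times continuously differentiable, x₀ ∈ ℝ, and r ∈ ℝ fixed. For H > 0 set U_k = f(x₀ + kH) and define D_H(f) = (1/H)·[ μδU + rδ²U − (1/6 − r²/2)μδ³U − r(1/12 − r²/6)δ⁴U ], with the central difference operators on the five values U_{−2},…,U_2. Then D_H(f) = f′(x₀ + rH) + O(H⁴) as H → 0. -/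
/-!
Expand every sample `f (x₀ + k H)` to fifth order about `x₀` and `f' (x₀ + r H)` to fourth order.
The stencil reproduces `H f' (x₀ + r H)` exactly on polynomials of degree at most four, so after
dividing by `H` only the Taylor remainders, `O(H⁵) / H` and `O(H⁴)`, and a multiple of
`f⁽⁵⁾(x₀) H⁴` survive.
-/

open Real Asymptotics Filter Topology
open scoped Nat

noncomputable section

def taylorSum (a : ℕ → ℝ) (n : ℕ) (h : ℝ) : ℝ :=
  ∑ k ∈ Finset.range (n + 1), h ^ k / k ! * a k

theorem isLittleO_sub_taylorSum {f : ℝ → ℝ} {n : ℕ} (hf : ContDiff ℝ n f) (x₀ : ℝ) :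
    (fun h => f (x₀ + h) - taylorSum (fun k => iteratedDeriv k f x₀) n h)
      =o[𝓝 0] fun h => h ^ n := by
  have hshift : Tendsto (fun h : ℝ => x₀ + h) (𝓝 0) (𝓝 x₀) := by
    simpa using (continuous_const_add x₀).tendsto 0
  refine ((taylor_isLittleO_univ hf).comp_tendsto hshift).congr (fun h => ?_) (fun h => ?_)
  · simp [taylor_within_apply, iteratedDerivWithin_univ, taylorSum, smul_eq_mul, div_eq_inv_mul]
  · simp

theorem Asymptotics.IsBigO.comp_const_mul_pow {g : ℝ → ℝ} {n : ℕ}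
    (hg : g =O[𝓝 0] fun h => h ^ n) (c : ℝ) :
    (fun H => g (c * H)) =O[𝓝 0] fun H => H ^ n := by
  have hc : Tendsto (fun H : ℝ => c * H) (𝓝 0) (𝓝 0) := by
    simpa using (continuous_const_mul c).tendsto 0
  refine (hg.comp_tendsto hc).trans ?_
  simpa [Function.comp_def, mul_pow] using isBigO_const_mul_self (c ^ n) (fun H : ℝ => H ^ n) _

theorem Asymptotics.IsBigO.one_div_mul_of_pow_succ {α : Type*} {l : Filter α} {x g : α → ℝ}
    {n : ℕ} (hg : g =O[l] fun a => x a ^ (n + 1)) :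
    (fun a => 1 / x a * g a) =O[l] fun a => x a ^ n := by
  refine ((isBigO_refl (fun a => 1 / x a) l).mul hg).trans
    (IsBigO.of_bound 1 (.of_forall fun a => ?_))
  rcases eq_or_ne (x a) 0 with h | h
  · simp [h]
  · rw [one_mul, one_div, pow_succ', inv_mul_cancel_left₀ h]

/-- `H` times the paper's `D_H`, with samples `U_k = u (k H)`. -/
def neumannStencil (r : ℝ) (u : ℝ → ℝ) (H : ℝ) : ℝ :=
  (u H - u (-H)) / 2
    + r * (u H - 2 * u 0 + u (-H))
    - (1 / 6 - r ^ 2 / 2) * ((u (2 * H) - 2 * u H + 2 * u (-H) - u (-(2 * H))) / 2)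
    - r * (1 / 12 - r ^ 2 / 6) * (u (2 * H) - 4 * u H + 6 * u 0 - 4 * u (-H) + u (-(2 * H)))

theorem neumannStencil_add (r : ℝ) (u v : ℝ → ℝ) (H : ℝ) :
    neumannStencil r (u + v) H = neumannStencil r u H + neumannStencil r v H := by
  simp only [neumannStencil, Pi.add_apply]
  ring

-- `-(4 - 15 r² + 5 r⁴) / 120` is the defect of the stencil on `h⁵ / 5!`.
theorem neumannStencil_taylorSum (r : ℝ) (a : ℕ → ℝ) (H : ℝ) :
    neumannStencil r (taylorSum a 5) H =
      H * (taylorSum (fun k => a (k + 1)) 4 (r * H)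
        + (-(1 / 30) + r ^ 2 / 8 - r ^ 4 / 24) * a 5 * H ^ 4) := by
  simp [neumannStencil, taylorSum, Finset.sum_range_succ, Nat.factorial]
  ring

theorem neumannStencil_isBigO {u : ℝ → ℝ} {n : ℕ} (hu : u =O[𝓝 0] fun h => h ^ n) (r : ℝ) :
    (fun H => neumannStencil r u H) =O[𝓝 0] fun H => H ^ n := by
  have hp1 : (fun H => u H) =O[𝓝 0] fun H => H ^ n := by simpa using hu.comp_const_mul_pow 1
  have hm1 : (fun H => u (-H)) =O[𝓝 0] fun H => H ^ n := by simpa using hu.comp_const_mul_pow (-1)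
  have hp2 := hu.comp_const_mul_pow 2
  have hm2 : (fun H => u (-(2 * H))) =O[𝓝 0] fun H => H ^ n := by
    simpa using hu.comp_const_mul_pow (-2)
  have h0 : (fun _ => u 0) =O[𝓝 0] fun H : ℝ => H ^ n := by simpa using hu.comp_const_mul_pow 0
  refine (((((hp1.sub hm1).const_mul_left (1 / 2)).add
    (((hp1.sub (h0.const_mul_left 2)).add hm1).const_mul_left r)).sub
    ((((hp2.sub (hp1.const_mul_left 2)).add (hm1.const_mul_left 2)).sub hm2).const_mul_left
      ((1 / 6 - r ^ 2 / 2) / 2))).sub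
    (((((hp2.sub (hp1.const_mul_left 4)).add (h0.const_mul_left 6)).sub
      (hm1.const_mul_left 4)).add hm2).const_mul_left (r * (1 / 12 - r ^ 2 / 6)))).congr_left
    fun H => ?_
  simp only [neumannStencil]
  ring

end

theorem neumann_tbc_fourth_order_consistency
    (f : ℝ → ℝ) (hf : ContDiff ℝ 6 f) (x₀ r : ℝ) :
    (fun H : ℝ =>
        (1 / H) *
            (((f (x₀ + H) - f (x₀ - H)) / 2)
              + r * (f (x₀ + H) - 2 * f x₀ + f (x₀ - H))
              - (1 / 6 - r ^ 2 / 2) *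
                  ((f (x₀ + 2 * H) - 2 * f (x₀ + H) + 2 * f (x₀ - H) - f (x₀ - 2 * H)) / 2)
              - r * (1 / 12 - r ^ 2 / 6) *
                  (f (x₀ + 2 * H) - 4 * f (x₀ + H) + 6 * f x₀ - 4 * f (x₀ - H)
                    + f (x₀ - 2 * H)))
          - deriv f (x₀ + r * H))
      =O[nhdsWithin 0 (Set.Ioi 0)] fun H : ℝ => H ^ 4 := by
  set a : ℕ → ℝ := fun k => iteratedDeriv k f x₀
  set R : ℝ → ℝ := fun h => f (x₀ + h) - taylorSum a 5 h
  set R' : ℝ → ℝ := fun h => deriv f (x₀ + h) - taylorSum (fun k => a (k + 1)) 4 h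
  have hR : R =O[𝓝 0] fun h => h ^ 5 :=
    (isLittleO_sub_taylorSum (hf.of_le (by norm_num)) x₀).isBigO
  have hf' : ContDiff ℝ 4 (deriv f) := (hf.of_le (by norm_num : (4 : WithTop ℕ∞) + 1 ≤ 6)).deriv'
  have hR' : R' =O[𝓝 0] fun h => h ^ 4 := by
    simpa only [R', a, iteratedDeriv_succ'] using (isLittleO_sub_taylorSum hf' x₀).isBigO
  have hsplit : ∀ H ≠ 0, (1 / H) * neumannStencil r (fun h => f (x₀ + h)) H - deriv f (x₀ + r * H)
      = 1 / H * neumannStencil r R H + (-(1 / 30) + r ^ 2 / 8 - r ^ 4 / 24) * a 5 * H ^ 4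
        - R' (r * H) := by
    intro H hH
    have hu : (fun h => f (x₀ + h)) = taylorSum a 5 + R := by ext h; simp [R]
    rw [hu, neumannStencil_add, neumannStencil_taylorSum]
    field_simp
    ring
  have hbound : (fun H => 1 / H * neumannStencil r R H
      + (-(1 / 30) + r ^ 2 / 8 - r ^ 4 / 24) * a 5 * H ^ 4 - R' (r * H)) =O[𝓝 0] fun H => H ^ 4 :=
    (((neumannStencil_isBigO hR r).one_div_mul_of_pow_succ).add
      (isBigO_const_mul_self _ _ _)).sub (hR'.comp_const_mul_pow r)
  refine EventuallyEq.trans_isBigO ?_ (hbound.mono nhdsWithin_le_nhds)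
  filter_upwards [self_mem_nhdsWithin] with H hH
  rw [← hsplit H (ne_of_gt hH)]
  simp only [neumannStencil, ← sub_eq_add_neg, add_zero]
end

section
/- Let u : ℝ → ℝ be seven times continuously differentiable and x ∈ ℝ. For H > 0 define μδu(x) = (u(x+H) − u(x−H))/2, and μδ³, μδ⁵ by composing with δ² (where δ²u(x) = u(x+H) − 2u(x) + u(x−H)). Then (1/H)[ μδu(x) − (1/6)μδ³u(x) + (1/30)μδ⁵u(x) ] = u′(x) + O(H⁶) as H → 0. -/
/-!
Expand each `u (x ± k * H)`, `k = 1, 2, 3`, by Taylor's theorem to order six with an `O(H ^ 7)`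
remainder. In the stencil `3/4, -3/20, 1/60` of odd differences the even-order terms cancel by
symmetry, and the odd moments `∑ wₖ k ^ j` equal `1/2, 0, 0` for `j = 1, 3, 5`, so only
`H * u' x` survives; dividing by `H` leaves `O(H ^ 6)`.
-/

open Real Asymptotics Filter
open Finset Topology Nat

theorem taylor_isBigO_comp_add_mul {E : Type*} [NormedAddCommGroup E] [NormedSpace ℝ E]
    {f : ℝ → E} {n : ℕ} (hf : ContDiff ℝ (n + 1 : ℕ) f) (x a : ℝ) :
    (fun h : ℝ => f (x + a * h)
        - ∑ k ∈ range (n + 1), ((k ! : ℝ)⁻¹ * (a * h) ^ k) • iteratedDeriv k f x)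
      =O[𝓝 0] fun h => h ^ (n + 1) := by
  have hline : Tendsto (fun h : ℝ => x + a * h) (𝓝 0) (𝓝 x) :=
    (continuous_const.add (continuous_const.mul continuous_id)).tendsto' 0 x (by simp)
  have hrem : (fun h : ℝ => f (x + a * h) - taylorWithinEval f (n + 1) Set.univ x (x + a * h))
      =O[𝓝 0] fun h => h ^ (n + 1) :=
    ((taylor_isLittleO_univ hf).comp_tendsto hline).isBigO.trans <|
      isBigO_of_le' (c := |a| ^ (n + 1)) _ fun h => by simp [mul_pow]
  have hlast : (fun h : ℝ => (((n + 1) ! : ℝ)⁻¹ * (a * h) ^ (n + 1)) • iteratedDeriv (n + 1) f x)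
      =O[𝓝 0] fun h => h ^ (n + 1) :=
    isBigO_of_le' (c := ((n + 1) ! : ℝ)⁻¹ * |a| ^ (n + 1) * ‖iteratedDeriv (n + 1) f x‖) _
      fun h => le_of_eq <| by simp [norm_smul, mul_pow]; ring
  refine (hrem.add hlast).congr_left fun h => ?_
  simp only [taylor_within_apply, iteratedDerivWithin_univ, add_sub_cancel_left,
    sum_range_succ _ (n + 1)]
  abel

theorem isBigO_inv_mul_of_isBigO_pow_succ {α 𝕜 : Type*} [NormedField 𝕜] {l : Filter α}
    {f g : α → 𝕜} {n : ℕ} (h : f =O[l] fun t => g t ^ (n + 1)) :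
    (fun t => (g t)⁻¹ * f t) =O[l] fun t => g t ^ n :=
  (isBigO_refl (fun t => (g t)⁻¹) l).mul h |>.trans <|
    isBigO_of_le _ fun t => by
      rcases eq_or_ne (g t) 0 with h0 | h0
      · simp [h0]
      · rw [pow_succ, ← mul_assoc, mul_comm (g t)⁻¹, mul_assoc, inv_mul_cancel₀ h0, mul_one]

/-- The operator `μδ - μδ³/6 + μδ⁵/30`, multiplied out and grouped by offset. -/
noncomputable def centralStencil6 (u : ℝ → ℝ) (x H : ℝ) : ℝ :=
  3 / 4 * (u (x + H) - u (x - H)) - 3 / 20 * (u (x + 2 * H) - u (x - 2 * H))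
    + 1 / 60 * (u (x + 3 * H) - u (x - 3 * H))

theorem centralStencil6_sub_isBigO {u : ℝ → ℝ} (hu : ContDiff ℝ 7 u) (x : ℝ) :
    (fun H => centralStencil6 u x H - H * deriv u x) =O[𝓝 0] fun H => H ^ 7 := by
  have R (a : ℝ) := taylor_isBigO_comp_add_mul (n := 6) hu x a
  refine ((((R 1).sub (R (-1))).const_mul_left (3 / 4)).sub
    (((R 2).sub (R (-2))).const_mul_left (3 / 20)) |>.add
    (((R 3).sub (R (-3))).const_mul_left (1 / 60))).congr_left fun H => ?_
  simp only [centralStencil6, sum_range_succ, sum_range_zero, factorial, iteratedDeriv_one,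
    one_mul, neg_mul, ← sub_eq_add_neg, smul_eq_mul]
  push_cast
  ring

theorem advection_discretisation_sixth_order
    (u : ℝ → ℝ) (hu : ContDiff ℝ 7 u) (x : ℝ) :
    (fun H : ℝ =>
        (1 / H) *
            (((u (x + H) - u (x - H)) / 2)
              - (1 / 6) *
                  ((u (x + 2 * H) - 2 * u (x + H) + 2 * u (x - H) - u (x - 2 * H)) / 2)
              + (1 / 30) *
                  ((u (x + 3 * H) - 4 * u (x + 2 * H) + 5 * u (x + H) - 5 * u (x - H)
                      + 4 * u (x - 2 * H) - u (x - 3 * H)) / 2))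
          - deriv u x)
      =O[nhdsWithin 0 (Set.Ioi 0)] fun H : ℝ => H ^ 6 := by
  refine ((isBigO_inv_mul_of_isBigO_pow_succ (centralStencil6_sub_isBigO hu x)).mono
    nhdsWithin_le_nhds).congr' ?_ EventuallyEq.rfl
  filter_upwards [self_mem_nhdsWithin] with H (hH : 0 < H)
  rw [mul_sub, inv_mul_cancel_left₀ hH.ne', centralStencil6]
  ring
end

section
/- Let f : ℝ → ℝ be five times continuously differentiable, x₀ ∈ ℝ, and fix reals a, b, r. For H > 0 define the mixed boundary functional M_H(f) = a·f(x₀+rH) + (b)·f′(x₀+rH) and its interpolated approximation Ṁ_H = a·[1 + rμδ + (r²/2)δ² + (r(r²−1)/6)μδ³ + (r²(r²−1)/24)δ⁴]U + (b/H)·[μδ + rδ² − (1/6 − r²/2)μδ³ − r(1/12 − r²/6)δ⁴]U, where U_k = f(x₀+kH) and the central difference operators act on U_{−2},…,U_2. Then Ṁ_H − M_H(f) = O(H⁴) as H → 0. -/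
open Real Asymptotics Filter Set Topology

/-!
Both stencils are exact on quartics: `interpValue` reproduces the value of a quartic at
`x₀ + r H`, and `interpScaledDeriv` reproduces `H` times its derivative there. Subtracting the
degree-4 Taylor polynomial of `f` at `x₀` therefore leaves only the Taylor remainder `R`, for
which `R (x₀ + t) = O(t⁵)` and `R' (x₀ + t) = O(t⁴)`. Every central difference of `R` is then
`O(H⁵)`, so the value error is `O(H⁵)`, and the derivative error, divided by `H`, is `O(H⁴)`.
-/

section Taylor

variable {E : Type*} [NormedAddCommGroup E] [NormedSpace ℝ E]

theorem taylor_isBigO_univ {f : ℝ → E} {x₀ : ℝ} {n : ℕ} (hf : ContDiff ℝ (n + 1 : ℕ) f) :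
    (fun x ↦ f x - taylorWithinEval f n univ x₀ x)
      =O[𝓝 x₀] fun x ↦ (x - x₀) ^ (n + 1) := by
  have hnext :
      (fun x ↦ taylorWithinEval f (n + 1) univ x₀ x - taylorWithinEval f n univ x₀ x)
        =O[𝓝 x₀] fun x ↦ (x - x₀) ^ (n + 1) := by
    refine isBigO_of_le' _ (c := |((n + 1 : ℝ) * n.factorial)⁻¹|
      * ‖iteratedDerivWithin (n + 1) f univ x₀‖) fun x ↦ ?_
    rw [taylorWithinEval_succ, add_sub_cancel_left, norm_smul, norm_mul, norm_pow]
    simp only [Real.norm_eq_abs]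
    exact le_of_eq (by ring)
  exact ((taylor_isLittleO_univ hf).isBigO.add hnext).congr_left fun x ↦ by abel

end Taylor

theorem isBigO_comp_add_const_mul {g : ℝ → ℝ} {x₀ : ℝ} {n : ℕ}
    (hg : g =O[𝓝 x₀] fun x ↦ (x - x₀) ^ n) (c : ℝ) :
    (fun H ↦ g (x₀ + c * H)) =O[𝓝 0] fun H ↦ H ^ n := by
  have hlim : Tendsto (fun H : ℝ ↦ x₀ + c * H) (𝓝 0) (𝓝 x₀) := by
    simpa using ((continuous_const_mul c).const_add x₀).tendsto 0
  refine (hg.comp_tendsto hlim).trans ?_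
  simpa [Function.comp_def, mul_pow] using
    (isBigO_refl (fun H : ℝ ↦ H ^ n) (𝓝 0)).const_mul_left (c ^ n)

noncomputable section CentralDifferences

variable (g : ℝ → ℝ) (x₀ H : ℝ)

def muDelta : ℝ := (g (x₀ + H) - g (x₀ - H)) / 2

def deltaSq : ℝ := g (x₀ + H) - 2 * g x₀ + g (x₀ - H)

def muDeltaCube : ℝ :=
  (g (x₀ + 2 * H) - 2 * g (x₀ + H) + 2 * g (x₀ - H) - g (x₀ - 2 * H)) / 2

def deltaFourth : ℝ :=
  g (x₀ + 2 * H) - 4 * g (x₀ + H) + 6 * g x₀ - 4 * g (x₀ - H) + g (x₀ - 2 * H)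

variable {g x₀}

theorem muDelta_isBigO {n : ℕ} (hg : g =O[𝓝 x₀] fun x ↦ (x - x₀) ^ n) :
    (fun H ↦ muDelta g x₀ H) =O[𝓝 0] fun H ↦ H ^ n :=
  have sample := isBigO_comp_add_const_mul hg
  (((sample 1).sub (sample (-1))).const_mul_left (1 / 2)).congr_left fun H ↦ by
    simp only [muDelta]; ring_nf

theorem deltaSq_isBigO {n : ℕ} (hg : g =O[𝓝 x₀] fun x ↦ (x - x₀) ^ n) :
    (fun H ↦ deltaSq g x₀ H) =O[𝓝 0] fun H ↦ H ^ n :=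
  have sample := isBigO_comp_add_const_mul hg
  (((sample 1).sub ((sample 0).const_mul_left 2)).add (sample (-1))).congr_left fun H ↦ by
    simp only [deltaSq]; ring_nf

theorem muDeltaCube_isBigO {n : ℕ} (hg : g =O[𝓝 x₀] fun x ↦ (x - x₀) ^ n) :
    (fun H ↦ muDeltaCube g x₀ H) =O[𝓝 0] fun H ↦ H ^ n :=
  have sample := isBigO_comp_add_const_mul hg
  (((((sample 2).sub ((sample 1).const_mul_left 2)).add ((sample (-1)).const_mul_left 2)).sub
    (sample (-2))).const_mul_left (1 / 2)).congr_left fun H ↦ by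
    simp only [muDeltaCube]; ring_nf

theorem deltaFourth_isBigO {n : ℕ} (hg : g =O[𝓝 x₀] fun x ↦ (x - x₀) ^ n) :
    (fun H ↦ deltaFourth g x₀ H) =O[𝓝 0] fun H ↦ H ^ n :=
  have sample := isBigO_comp_add_const_mul hg
  (((((sample 2).sub ((sample 1).const_mul_left 4)).add ((sample 0).const_mul_left 6)).sub
    ((sample (-1)).const_mul_left 4)).add (sample (-2))).congr_left fun H ↦ by
    simp only [deltaFourth]; ring_nf

end CentralDifferences

noncomputable section Interpolation

variable (r : ℝ) (g : ℝ → ℝ) (x₀ H : ℝ)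

-- The paper's expansions (doper) and (boper); the second approximates `H * f' (x₀ + r H)`.
def interpValue : ℝ :=
  g x₀ + r * muDelta g x₀ H + r ^ 2 / 2 * deltaSq g x₀ H
    + r * (r ^ 2 - 1) / 6 * muDeltaCube g x₀ H + r ^ 2 * (r ^ 2 - 1) / 24 * deltaFourth g x₀ H

def interpScaledDeriv : ℝ :=
  muDelta g x₀ H + r * deltaSq g x₀ H - (1 / 6 - r ^ 2 / 2) * muDeltaCube g x₀ H
    - r * (1 / 12 - r ^ 2 / 6) * deltaFourth g x₀ H

theorem interpValue_sub (f : ℝ → ℝ) :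
    interpValue r (f - g) x₀ H = interpValue r f x₀ H - interpValue r g x₀ H := by
  simp only [interpValue, muDelta, deltaSq, muDeltaCube, deltaFourth, Pi.sub_apply]
  ring

theorem interpScaledDeriv_sub (f : ℝ → ℝ) :
    interpScaledDeriv r (f - g) x₀ H
      = interpScaledDeriv r f x₀ H - interpScaledDeriv r g x₀ H := by
  simp only [interpScaledDeriv, muDelta, deltaSq, muDeltaCube, deltaFourth, Pi.sub_apply]
  ring

theorem interpValue_taylorWithinEval (s : Set ℝ) :
    interpValue r (taylorWithinEval g 4 s x₀) x₀ H
      = taylorWithinEval g 4 s x₀ (x₀ + r * H) := by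
  simp only [interpValue, muDelta, deltaSq, muDeltaCube, deltaFourth, taylor_within_apply,
    Finset.sum_range_succ, Finset.sum_range_zero, smul_eq_mul, Nat.factorial]
  ring

theorem interpScaledDeriv_taylorWithinEval (s : Set ℝ) :
    interpScaledDeriv r (taylorWithinEval g 4 s x₀) x₀ H
      = H * taylorWithinEval (derivWithin g s) 3 s x₀ (x₀ + r * H) := by
  simp only [interpScaledDeriv, muDelta, deltaSq, muDeltaCube, deltaFourth, taylor_within_apply,
    ← iteratedDerivWithin_succ', Finset.sum_range_succ, Finset.sum_range_zero, smul_eq_mul,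
    Nat.factorial]
  ring

variable {g x₀}

theorem interpValue_isBigO {n : ℕ} (hg : g =O[𝓝 x₀] fun x ↦ (x - x₀) ^ n) :
    (fun H ↦ interpValue r g x₀ H) =O[𝓝 0] fun H ↦ H ^ n := by
  have hg0 : (fun _ ↦ g x₀) =O[𝓝 (0 : ℝ)] fun H ↦ H ^ n := by
    simpa using isBigO_comp_add_const_mul hg 0
  exact (((hg0.add ((muDelta_isBigO hg).const_mul_left r)).add
    ((deltaSq_isBigO hg).const_mul_left _)).add ((muDeltaCube_isBigO hg).const_mul_left _)).add
    ((deltaFourth_isBigO hg).const_mul_left _)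

theorem interpScaledDeriv_isBigO {n : ℕ} (hg : g =O[𝓝 x₀] fun x ↦ (x - x₀) ^ n) :
    (fun H ↦ interpScaledDeriv r g x₀ H) =O[𝓝 0] fun H ↦ H ^ n :=
  (((muDelta_isBigO hg).add ((deltaSq_isBigO hg).const_mul_left r)).sub
    ((muDeltaCube_isBigO hg).const_mul_left _)).sub ((deltaFourth_isBigO hg).const_mul_left _)

end Interpolation

section Consistency

variable {f : ℝ → ℝ} (r x₀ : ℝ)

theorem interpValue_sub_apply_isBigO (hf : ContDiff ℝ 5 f) :
    (fun H ↦ interpValue r f x₀ H - f (x₀ + r * H)) =O[𝓝 0] fun H ↦ H ^ 5 := by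
  set T := taylorWithinEval f 4 univ x₀
  have hR : (f - T) =O[𝓝 x₀] fun x ↦ (x - x₀) ^ 5 := taylor_isBigO_univ hf
  refine ((interpValue_isBigO r hR).sub (isBigO_comp_add_const_mul hR r)).congr_left fun H ↦ ?_
  rw [interpValue_sub, interpValue_taylorWithinEval, Pi.sub_apply]
  ring

theorem interpScaledDeriv_sub_mul_deriv_isBigO (hf : ContDiff ℝ 5 f) :
    (fun H ↦ interpScaledDeriv r f x₀ H - H * deriv f (x₀ + r * H))
      =O[𝓝 0] fun H ↦ H ^ 5 := by
  set T := taylorWithinEval f 4 univ x₀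
  have hR : (f - T) =O[𝓝 x₀] fun x ↦ (x - x₀) ^ 5 := taylor_isBigO_univ hf
  have hf' : ContDiff ℝ (3 + 1 : ℕ) (deriv f) := ((contDiff_succ_iff_deriv (n := 4)).mp hf).2.2
  have hR' := isBigO_comp_add_const_mul (taylor_isBigO_univ (x₀ := x₀) hf') r
  have hscaled := ((isBigO_refl (fun H : ℝ ↦ H) (𝓝 0)).mul hR').congr_right
    (g₂ := (· ^ 5)) fun H ↦ by ring
  refine ((interpScaledDeriv_isBigO r hR).sub hscaled).congr_left fun H ↦ ?_
  rw [interpScaledDeriv_sub, interpScaledDeriv_taylorWithinEval, derivWithin_univ]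
  ring

end Consistency

theorem mixed_tbc_fourth_order_consistency
    (f : ℝ → ℝ) (hf : ContDiff ℝ 5 f) (x₀ a b r : ℝ) :
    (fun H : ℝ =>
        (a * (f x₀
              + r * ((f (x₀ + H) - f (x₀ - H)) / 2)
              + r ^ 2 / 2 * (f (x₀ + H) - 2 * f x₀ + f (x₀ - H))
              + r * (r ^ 2 - 1) / 6 *
                  ((f (x₀ + 2 * H) - 2 * f (x₀ + H) + 2 * f (x₀ - H) - f (x₀ - 2 * H)) / 2)
              + r ^ 2 * (r ^ 2 - 1) / 24 *
                  (f (x₀ + 2 * H) - 4 * f (x₀ + H) + 6 * f x₀ - 4 * f (x₀ - H)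
                    + f (x₀ - 2 * H)))
          + (b / H) * (((f (x₀ + H) - f (x₀ - H)) / 2)
              + r * (f (x₀ + H) - 2 * f x₀ + f (x₀ - H))
              - (1 / 6 - r ^ 2 / 2) *
                  ((f (x₀ + 2 * H) - 2 * f (x₀ + H) + 2 * f (x₀ - H) - f (x₀ - 2 * H)) / 2)
              - r * (1 / 12 - r ^ 2 / 6) *
                  (f (x₀ + 2 * H) - 4 * f (x₀ + H) + 6 * f x₀ - 4 * f (x₀ - H)
                    + f (x₀ - 2 * H))))
          - (a * f (x₀ + r * H) + b * deriv f (x₀ + r * H)))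
      =O[nhdsWithin 0 (Set.Ioi 0)] fun H : ℝ => H ^ 4 := by
  change (fun H ↦ a * interpValue r f x₀ H + b / H * interpScaledDeriv r f x₀ H
      - (a * f (x₀ + r * H) + b * deriv f (x₀ + r * H))) =O[𝓝[>] 0] _
  have hpow : (fun H : ℝ ↦ H ^ 5) =O[𝓝 0] fun H ↦ H ^ 4 :=
    (isLittleO_pow_pow (by norm_num)).isBigO
  have hvalue := ((interpValue_sub_apply_isBigO r x₀ hf).trans hpow).const_mul_left a
  have hderiv : (fun H ↦ b / H * (interpScaledDeriv r f x₀ H - H * deriv f (x₀ + r * H)))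
      =O[𝓝[>] 0] fun H ↦ H ^ 4 := by
    refine ((isBigO_refl (fun H ↦ b / H) _).mul
      ((interpScaledDeriv_sub_mul_deriv_isBigO r x₀ hf).mono nhdsWithin_le_nhds)).trans ?_
    refine ((isBigO_refl (fun H : ℝ ↦ H ^ 4) _).const_mul_left b).congr' ?_ EventuallyEq.rfl
    filter_upwards [self_mem_nhdsWithin] with H (hH : 0 < H)
    field_simp
  refine ((hvalue.mono nhdsWithin_le_nhds).add hderiv).congr' ?_ EventuallyEq.rfl
  filter_upwards [self_mem_nhdsWithin] with H (hH : 0 < H)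
  field_simp
  ring
end

section
/- For every real t with |t| small enough (e.g. |t| < 1), the identity cosh(t/2) / √(1 + sinh²(t/2)) = 1 holds; consequently, with δ = 2 sinh(t/2) and μ = cosh(t/2), multiplying any operator expansion by μ/√(1 + δ²/4) leaves its action on analytic functions unchanged while converting, in the formal series in δ and μ, terms with an even number of the symbols μ, δ into terms with an odd number, so that the resulting derivative formula E^{±r}H∂ₓ = (μ/√(1+δ²/4))(1+μδ+δ²/2)^{±r}·2 arcsinh(δ/2) uses only whole-grid-point values; in particular, as t → 0, e^{rt}·t = μδ + rδ² − (1/6 − r²/2)μδ³ − r(1/12 − r²/6)δ⁴ + O(t⁵). -/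
open Real Asymptotics Filter

private lemma exp_taylor5_isBigO (c : ℝ) :
    (fun t : ℝ => Real.exp (c * t) -
      (1 + c * t + (c * t) ^ 2 / 2 + (c * t) ^ 3 / 6 + (c * t) ^ 4 / 24))
      =O[nhds 0] fun t : ℝ => t ^ 5 := by
  rw [isBigO_iff]
  refine ⟨(|c| + 1) ^ 5, ?_⟩
  filter_upwards [Metric.ball_mem_nhds (0 : ℝ)
    (by positivity : (0:ℝ) < (|c| + 1)⁻¹)] with t ht
  rw [Metric.mem_ball, Real.dist_0_eq_abs] at ht
  have hc1 : (0:ℝ) < |c| + 1 := by positivity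
  have ht' : |t| * (|c| + 1) < 1 :=
    (lt_div_iff₀ hc1).mp (by rwa [← one_div] at ht)
  have h1 : |c * t| ≤ 1 := by
    rw [abs_mul]
    nlinarith [abs_nonneg c, abs_nonneg t]
  have hb := Real.exp_bound h1 (by norm_num : 0 < 5)
  have hsum : ∑ m ∈ Finset.range 5, (c * t) ^ m / (m.factorial : ℝ)
      = 1 + c * t + (c * t) ^ 2 / 2 + (c * t) ^ 3 / 6 + (c * t) ^ 4 / 24 := by
    simp [Finset.sum_range_succ]
    norm_num [Nat.factorial]
  rw [hsum] at hb
  have h2 : |c * t| ^ 5 ≤ ((|c| + 1) * |t|) ^ 5 := by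
    apply pow_le_pow_left₀ (abs_nonneg _)
    rw [abs_mul]
    nlinarith [abs_nonneg c, abs_nonneg t]
  have h3 : ‖t ^ 5‖ = |t| ^ 5 := by
    rw [Real.norm_eq_abs, abs_pow]
  rw [Real.norm_eq_abs, h3]
  calc |Real.exp (c * t) - (1 + c * t + (c * t) ^ 2 / 2 + (c * t) ^ 3 / 6 + (c * t) ^ 4 / 24)|
      ≤ |c * t| ^ 5 * ((5 + 1 : ℕ) / ((5).factorial * 5) : ℝ) := hb
    _ ≤ ((|c| + 1) * |t|) ^ 5 * 1 := by
        apply mul_le_mul h2 (by norm_num [Nat.factorial]) (by positivity) (by positivity)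
    _ = (|c| + 1) ^ 5 * |t| ^ 5 := by ring

private lemma exp_taylor4_mul_isBigO (c : ℝ) :
    (fun t : ℝ => t * (Real.exp (c * t) -
      (1 + c * t + (c * t) ^ 2 / 2 + (c * t) ^ 3 / 6)))
      =O[nhds 0] fun t : ℝ => t ^ 5 := by
  rw [isBigO_iff]
  refine ⟨(|c| + 1) ^ 4, ?_⟩
  filter_upwards [Metric.ball_mem_nhds (0 : ℝ)
    (by positivity : (0:ℝ) < (|c| + 1)⁻¹)] with t ht
  rw [Metric.mem_ball, Real.dist_0_eq_abs] at ht
  have hc1 : (0:ℝ) < |c| + 1 := by positivity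
  have ht' : |t| * (|c| + 1) < 1 :=
    (lt_div_iff₀ hc1).mp (by rwa [← one_div] at ht)
  have h1 : |c * t| ≤ 1 := by
    rw [abs_mul]
    nlinarith [abs_nonneg c, abs_nonneg t]
  have hb := Real.exp_bound h1 (by norm_num : 0 < 4)
  have hsum : ∑ m ∈ Finset.range 4, (c * t) ^ m / (m.factorial : ℝ)
      = 1 + c * t + (c * t) ^ 2 / 2 + (c * t) ^ 3 / 6 := by
    simp [Finset.sum_range_succ]
    norm_num [Nat.factorial]
  rw [hsum] at hb
  have h2 : |c * t| ^ 4 ≤ ((|c| + 1) * |t|) ^ 4 := by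
    apply pow_le_pow_left₀ (abs_nonneg _)
    rw [abs_mul]
    nlinarith [abs_nonneg c, abs_nonneg t]
  have h3 : ‖t ^ 5‖ = |t| ^ 5 := by
    rw [Real.norm_eq_abs, abs_pow]
  rw [Real.norm_eq_abs, h3, abs_mul]
  calc |t| * |Real.exp (c * t) - (1 + c * t + (c * t) ^ 2 / 2 + (c * t) ^ 3 / 6)|
      ≤ |t| * (|c * t| ^ 4 * ((4 + 1 : ℕ) / ((4).factorial * 4) : ℝ)) := by
        exact mul_le_mul_of_nonneg_left hb (abs_nonneg t)
    _ ≤ |t| * (((|c| + 1) * |t|) ^ 4 * 1) := by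
        apply mul_le_mul_of_nonneg_left _ (abs_nonneg t)
        apply mul_le_mul h2 (by norm_num [Nat.factorial]) (by positivity) (by positivity)
    _ = (|c| + 1) ^ 4 * |t| ^ 5 := by ring

theorem boper_fourth_order_expansion (r : ℝ) :
    (∀ t : ℝ, |t| < 1 →
        Real.cosh (t / 2) / Real.sqrt (1 + (Real.sinh (t / 2)) ^ 2) = 1) ∧
    (fun t : ℝ =>
        Real.exp (r * t) * t -
          ((Real.cosh (t / 2) * (2 * Real.sinh (t / 2)))
            + r * (2 * Real.sinh (t / 2)) ^ 2
            - (1 / 6 - r ^ 2 / 2) * (Real.cosh (t / 2) * (2 * Real.sinh (t / 2)) ^ 3)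
            - r * (1 / 12 - r ^ 2 / 6) * (2 * Real.sinh (t / 2)) ^ 4))
      =O[nhds 0] fun t : ℝ => t ^ 5 := by
  constructor
  · intro t _
    have h1 : 1 + Real.sinh (t / 2) ^ 2 = Real.cosh (t / 2) ^ 2 := by
      rw [Real.cosh_sq]; ring
    rw [h1, Real.sqrt_sq (Real.cosh_pos (t/2)).le, div_self (Real.cosh_pos (t/2)).ne']
  · -- coefficients
    set a₄ : ℝ := -1/12 - r/12 + r^2/4 + r^3/6 with ha4
    set a₂ : ℝ := 2/3 + 4*r/3 - r^2/2 - 2*r^3/3 with ha2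
    set am₂ : ℝ := -2/3 + 4*r/3 + r^2/2 - 2*r^3/3 with ham2
    set am₄ : ℝ := 1/12 - r/12 - r^2/4 + r^3/6 with ham4
    have h := ((((exp_taylor4_mul_isBigO r).sub
      ((exp_taylor5_isBigO 2).const_mul_left a₄)).sub
      ((exp_taylor5_isBigO 1).const_mul_left a₂)).sub
      ((exp_taylor5_isBigO (-1)).const_mul_left am₂)).sub
      ((exp_taylor5_isBigO (-2)).const_mul_left am₄)
    refine h.congr' (Eventually.of_forall fun t => ?_) EventuallyEq.rfl
    simp only [Pi.sub_apply]
    have hy : Real.exp (t / 2) ≠ 0 := (Real.exp_pos _).ne'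
    have e2 : Real.exp (2 * t) = Real.exp (t / 2) ^ 4 := by
      rw [← Real.exp_nat_mul]; congr 1; push_cast; ring
    have e1 : Real.exp (1 * t) = Real.exp (t / 2) ^ 2 := by
      rw [← Real.exp_nat_mul]; congr 1; push_cast; ring
    have em1 : Real.exp (-1 * t) = (Real.exp (t / 2) ^ 2)⁻¹ := by
      rw [← e1, ← Real.exp_neg]; congr 1; ring
    have em2 : Real.exp (-2 * t) = (Real.exp (t / 2) ^ 4)⁻¹ := by
      rw [← e2, ← Real.exp_neg]; congr 1; ring
    have hc : Real.cosh (t / 2) = (Real.exp (t / 2) + (Real.exp (t / 2))⁻¹) / 2 := by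
      rw [Real.cosh_eq, Real.exp_neg]
    have hs : Real.sinh (t / 2) = (Real.exp (t / 2) - (Real.exp (t / 2))⁻¹) / 2 := by
      rw [Real.sinh_eq, Real.exp_neg]
    rw [hc, hs, e2, e1, em1, em2, ha4, ha2, ham2, ham4]
    field_simp
    ring
end
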